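/- arXiv:math/0110317 — 6 statements merged into one kernel-verified Lean document; each statement's English description precedes it below -/
import Mathlib

section
/- Small-gain theorem. Let 𝒯 be an additive subgroup of ℝ, 𝒰 a set of inputs, and μᵃ, μᵇ input measures. Suppose given a class-𝒦𝓛 function β, a number r₀ ≥ 0, a class-𝒦 function γ with γ(r) < r for all r > r₀, class-𝒦 functions σ₁, σ₂, σ₃, and constants d ≥ 0 and C ≥ 0. Let S be a set of trajectories such that every (τ,u,x,y) ∈ S satisfies: (H1) for each t₀ ∈ [0,τ) and each t ∈ [t₀,τ), y(t) ≤ max{β(x(t₀), t−t₀), γ(‖y‖_{[t₀,t]}), μᵃ(u,t₀,t), C}; and (H2) for each t₀ ∈ [0,τ) and each t ∈ [t₀,τ), x(t) ≤ max{σ₁(x(t₀)), σ₂(t−t₀), σ₃(‖y‖_{[t₀,t]}), μᵇ(u,t₀,t), d}. Then there exists a class-𝒦𝓛 function β̃ such that every trajectory (τ,u,x,y) ∈ S satisfies, for each t₀ ∈ [0,τ) and each t ∈ [t₀,τ): y(t) ≤ max{β̃(x(t₀), t−t₀), μᵐ(u,t₀,t), 3C, 3r₀}, where μᵐ(u,a,b)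 := max{β(σ₃(μᵃ(u,a,b)), 0), β(μᵇ(u,a,b), 0), μᵃ(u,a,b)}. -/
open Set Filter

/-- A function of class 𝒦: continuous, strictly increasing on `[0,∞)`, zero at zero,
and nonnegative on `[0,∞)`. -/
def ClassK (γ : ℝ → ℝ) : Prop :=
  ContinuousOn γ (Ici 0) ∧ StrictMonoOn γ (Ici 0) ∧ γ 0 = 0 ∧ ∀ s, 0 ≤ s → 0 ≤ γ s

/-- A function of class 𝒦∞: class 𝒦 and unbounded. -/
def ClassKInf (γ : ℝ → ℝ) : Prop :=
  ClassK γ ∧ Tendsto γ atTop atTop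

/-- A function of class 𝒦𝓛. -/
def ClassKL (β : ℝ → ℝ → ℝ) : Prop :=
  (∀ t, 0 ≤ t → ClassK (fun s => β s t)) ∧
  (∀ s, 0 ≤ s → ContinuousOn (β s) (Ici 0) ∧ AntitoneOn (β s) (Ici 0) ∧
    Tendsto (β s) atTop (nhds 0))

/-- An input measure on the set of inputs `U`: nonnegative, and monotone as a set
function on finite subintervals of `[0,∞)`. -/
def InputMeasure {U : Type*} (μ : U → ℝ → ℝ → ℝ) : Prop :=
  (∀ u a b, 0 ≤ a → 0 ≤ b → 0 ≤ μ u a b) ∧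
  (∀ u a b c d, 0 ≤ a → a ≤ b → b ≤ c → c ≤ d → μ u b c ≤ μ u a d)

/-- The sup norm of `y` over the interval `[a,b]` intersected with the time set `𝒯`. -/
noncomputable def supT (𝒯 : AddSubgroup ℝ) (y : ℝ → ℝ) (a b : ℝ) : ℝ :=
  sSup (y '' {t : ℝ | t ∈ 𝒯 ∧ t ∈ Icc a b})

/-- `(τ, u, x, y)` is a trajectory: `0 < τ ≤ ∞`, `x` and `y` map `[0,τ)` (intersected
with the time set `𝒯`) into `[0,∞)`, and `y` is bounded on every interval
`[a,b] ⊆ [0,τ)`. -/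
def IsTraj (𝒯 : AddSubgroup ℝ) (τ : EReal) (x y : ℝ → ℝ) : Prop :=
  0 < τ ∧
  (∀ t : ℝ, t ∈ 𝒯 → 0 ≤ t → (t : EReal) < τ → 0 ≤ x t ∧ 0 ≤ y t) ∧
  (∀ a b : ℝ, 0 ≤ a → a ≤ b → (b : EReal) < τ →
    BddAbove (y '' {t : ℝ | t ∈ 𝒯 ∧ t ∈ Icc a b}))

/-- Hypothesis (H1) for the trajectory `(τ, u, x, y)`. -/
def H1 (𝒯 : AddSubgroup ℝ) {U : Type*} (μa : U → ℝ → ℝ → ℝ) (β : ℝ → ℝ → ℝ)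
    (γ : ℝ → ℝ) (C : ℝ) (τ : EReal) (u : U) (x y : ℝ → ℝ) : Prop :=
  ∀ t0 t : ℝ, t0 ∈ 𝒯 → t ∈ 𝒯 → 0 ≤ t0 → t0 ≤ t → (t : EReal) < τ →
    y t ≤ max (max (β (x t0) (t - t0)) (γ (supT 𝒯 y t0 t))) (max (μa u t0 t) C)

/-- Hypothesis (H2) for the trajectory `(τ, u, x, y)`. -/
def H2 (𝒯 : AddSubgroup ℝ) {U : Type*} (μb : U → ℝ → ℝ → ℝ)
    (σ1 σ2 σ3 : ℝ → ℝ) (d : ℝ) (τ : EReal) (u : U) (x y : ℝ → ℝ) : Prop :=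
  ∀ t0 t : ℝ, t0 ∈ 𝒯 → t ∈ 𝒯 → 0 ≤ t0 → t0 ≤ t → (t : EReal) < τ →
    x t ≤ max (max (σ1 (x t0)) (σ2 (t - t0)))
      (max (σ3 (supT 𝒯 y t0 t)) (max (μb u t0 t) d))

open MeasureTheory intervalIntegral in
lemma exists_KL_bound (β : ℝ → ℝ → ℝ) (hβ : ClassKL β) (Φ : ℝ → ℝ → ℝ)
    (hmono : ∀ t, Monotone (fun s => Φ s t))
    (hanti : ∀ s, Antitone (Φ s))
    (hnn : ∀ s t, 0 ≤ Φ s t)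
    (hub : ∀ s t, Φ s t ≤ β (max s 0) 0)
    (hdec : ∀ s, 0 ≤ s → Tendsto (Φ s) atTop (nhds 0)) :
    ∃ βt : ℝ → ℝ → ℝ, ClassKL βt ∧ ∀ s t, 0 ≤ s → 0 ≤ t → Φ s t ≤ βt s t := by
  set U : ℝ → ℝ := fun s => β (max s 0) 0 with hU
  have hUmono : Monotone U := by
    intro a b hab
    exact ((hβ.1 0 le_rfl).2.1.monotoneOn) (le_max_right a 0) (le_max_right b 0)
      (max_le_max hab le_rfl)
  have hUnn : ∀ s, 0 ≤ U s := fun s => (hβ.1 0 le_rfl).2.2.2 _ (le_max_right _ _)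
  set B : ℝ → ℝ → ℝ := fun θ s => ∫ σ in s..(s+1), Φ σ θ with hB
  -- integrability of Φ in the first variable
  have hΦint : ∀ θ a b, IntervalIntegrable (fun σ => Φ σ θ) volume a b :=
    fun θ a b => (hmono θ).intervalIntegrable
  have hBnn : ∀ θ s, 0 ≤ B θ s := fun θ s =>
    integral_nonneg (by linarith) (fun σ _ => hnn σ θ)
  have hBub : ∀ θ s, B θ s ≤ U (s + 1) := by
    intro θ s
    have h1 : B θ s ≤ ∫ _σ in s..(s+1), U (s+1) := by
      refine integral_mono_on (by linarith) (hΦint θ s (s+1)) intervalIntegrable_const ?_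
      intro σ hσ
      exact (hub σ θ).trans (hUmono (by simpa using hσ.2))
    simpa using h1
  have hBanti : ∀ s, Antitone (fun θ => B θ s) := by
    intro s θ θ' h
    exact integral_mono_on (by linarith) (hΦint θ' s (s+1)) (hΦint θ s (s+1))
      (fun σ _ => hanti σ h)
  have hBrepr : ∀ θ s, B θ s = ∫ x in (0:ℝ)..1, Φ (x + s) θ := by
    intro θ s
    rw [intervalIntegral.integral_comp_add_right (fun σ => Φ σ θ) s, zero_add, add_comm 1 s]
  have hBmono : ∀ θ, Monotone (fun s => B θ s) := by
    intro θ s s' h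
    simp only [hBrepr]
    refine integral_mono_on (by norm_num)
      (((hmono θ).comp (fun a b hab => by simpa using add_le_add_right hab s : Monotone (fun x : ℝ => x + s))).intervalIntegrable)
      (((hmono θ).comp (fun a b hab => by simpa using add_le_add_right hab s' : Monotone (fun x : ℝ => x + s'))).intervalIntegrable) ?_
    intro x _
    exact hmono θ (by linarith)
  -- B θ s ≥ Φ s θ
  have hBge : ∀ θ s, Φ s θ ≤ B θ s := by
    intro θ s
    have h1 : (∫ _σ in s..(s+1), Φ s θ) ≤ B θ s := by
      refine integral_mono_on (by linarith) intervalIntegrable_const (hΦint θ s (s+1)) ?_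
      intro σ hσ
      exact hmono θ hσ.1
    simpa using h1
  set G : ℝ → ℝ → ℝ := fun s t => ∫ θ in (t-1)..t, B θ s with hG
  have hGrepr : ∀ s t, G s t = ∫ x in (0:ℝ)..1, B (x + (t-1)) s := by
    intro s t
    rw [intervalIntegral.integral_comp_add_right (fun θ => B θ s) (t-1), zero_add]
    have : (1:ℝ) + (t - 1) = t := by ring
    rw [this]
  have hBint : ∀ s a b c, IntervalIntegrable (fun θ => B (θ + c) s) volume a b :=
    fun s a b c => ((hBanti s).comp_monotone (fun x y hxy => by simpa using add_le_add_right hxy c : Monotone (fun x : ℝ => x + c))).intervalIntegrable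
  have hGnn : ∀ s t, 0 ≤ G s t := fun s t =>
    integral_nonneg (by linarith) (fun θ _ => hBnn θ s)
  have hGanti : ∀ s, Antitone (G s) := by
    intro s t t' h
    simp only [hGrepr]
    refine integral_mono_on (by norm_num) (hBint s 0 1 (t'-1)) (hBint s 0 1 (t-1)) ?_
    intro x _
    exact hBanti s (by linarith)
  have hGmono : ∀ t, Monotone (fun s => G s t) := by
    intro t s s' h
    exact integral_mono_on (by linarith)
      ((hBanti s).intervalIntegrable) ((hBanti s').intervalIntegrable)
      (fun θ _ => hBmono θ h)
  have hGge : ∀ s t, Φ s t ≤ G s t := by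
    intro s t
    rw [hGrepr]
    have h1 : (∫ _x in (0:ℝ)..1, Φ s t) ≤ ∫ x in (0:ℝ)..1, B (x + (t-1)) s := by
      refine integral_mono_on (by norm_num) intervalIntegrable_const (hBint s 0 1 (t-1)) ?_
      intro x hx
      exact (hBge t s).trans (hBanti s (by linarith [hx.2]))
    simpa using h1
  have hGub : ∀ s t, G s t ≤ U (s+1) := by
    intro s t
    have h1 : G s t ≤ ∫ _θ in (t-1)..t, U (s+1) := by
      refine integral_mono_on (by linarith) ((hBanti s).intervalIntegrable) intervalIntegrable_const ?_
      intro θ _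
      exact hBub θ s
    simpa using h1
  have hGdecay : ∀ s t, G s t ≤ Φ (s+1) (t-1) := by
    intro s t
    have h1 : G s t ≤ ∫ _θ in (t-1)..t, B (t-1) s := by
      refine integral_mono_on (by linarith) ((hBanti s).intervalIntegrable) intervalIntegrable_const ?_
      intro θ hθ
      exact hBanti s hθ.1
    have h2 : B (t-1) s ≤ Φ (s+1) (t-1) := by
      have h3 : B (t-1) s ≤ ∫ _σ in s..(s+1), Φ (s+1) (t-1) := by
        refine integral_mono_on (by linarith) (hΦint (t-1) s (s+1)) intervalIntegrable_const ?_
        intro σ hσ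
        exact hmono (t-1) hσ.2
      simpa using h3
    calc G s t ≤ (t - (t-1)) • B (t-1) s := by simpa using h1
    _ = B (t-1) s := by norm_num
    _ ≤ _ := h2
  -- Lipschitz continuity of G in t
  have hGlipt : ∀ s t t', |G s t - G s t'| ≤ 2 * U (s+1) * |t - t'| := by
    intro s t t'
    set P : ℝ → ℝ := fun r => ∫ θ in (0:ℝ)..r, B θ s with hP
    have hPsub : ∀ r r', P r - P r' = ∫ θ in r'..r, B θ s := fun r r' =>
      integral_interval_sub_left ((hBanti s).intervalIntegrable) ((hBanti s).intervalIntegrable)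
    have hPlip : ∀ r r', |P r - P r'| ≤ U (s+1) * |r - r'| := by
      intro r r'
      rw [hPsub]
      have := intervalIntegral.norm_integral_le_of_norm_le_const
        (C := U (s+1)) (f := fun θ => B θ s) (a := r') (b := r) ?_
      · simpa [Real.norm_eq_abs, abs_sub_comm r r'] using this
      · intro θ _
        rw [Real.norm_eq_abs, abs_of_nonneg (hBnn θ s)]
        exact hBub θ s
    have hGeq : ∀ r, G s r = P r - P (r-1) := fun r => (hPsub r (r-1)).symm
    calc |G s t - G s t'| = |(P t - P t') + (P (t'-1) - P (t-1))| := by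
          rw [hGeq, hGeq]; ring_nf
    _ ≤ |P t - P t'| + |P (t'-1) - P (t-1)| := abs_add_le _ _
    _ ≤ U (s+1) * |t - t'| + U (s+1) * |t' - 1 - (t-1)| := add_le_add (hPlip t t') (hPlip _ _)
    _ = 2 * U (s+1) * |t - t'| := by
          have : |t' - 1 - (t-1)| = |t - t'| := by rw [abs_sub_comm]; ring_nf
          rw [this]; ring
  have hGcontt : ∀ s, Continuous (G s) := by
    intro s
    have h2 : (0:ℝ) ≤ 2 * U (s+1) := by have := hUnn (s+1); linarith
    refine (LipschitzWith.of_dist_le_mul (K := (2 * U (s+1)).toNNReal) ?_).continuous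
    intro t t'
    rw [Real.dist_eq, Real.dist_eq, Real.coe_toNNReal _ h2]
    exact hGlipt s t t'
  -- continuity of G in s
  have hGconts : ∀ t, Continuous (fun s => G s t) := by
    intro t
    rw [continuous_iff_continuousAt]
    intro s₀
    refine continuousAt_of_locally_lipschitz (r := 1) one_pos (2 * U (s₀ + 2)) ?_
    intro s hs
    rw [Real.dist_eq] at hs ⊢
    rw [Real.dist_eq]
    -- pointwise bound on |B θ s - B θ s₀|
    have hBlip : ∀ θ, |B θ s - B θ s₀| ≤ 2 * U (s₀+2) * |s - s₀| := by
      intro θ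
      set Q : ℝ → ℝ := fun r => ∫ σ in (0:ℝ)..r, Φ σ θ with hQ
      have hQsub : ∀ r r', Q r - Q r' = ∫ σ in r'..r, Φ σ θ := fun r r' =>
        integral_interval_sub_left (hΦint θ 0 r) (hΦint θ 0 r')
      have hQlip : ∀ r r', r ≤ s₀ + 2 → r' ≤ s₀ + 2 → |Q r - Q r'| ≤ U (s₀+2) * |r - r'| := by
        intro r r' hr hr'
        rw [hQsub]
        have := intervalIntegral.norm_integral_le_of_norm_le_const
          (C := U (s₀+2)) (f := fun σ => Φ σ θ) (a := r') (b := r) ?_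
        · simpa [Real.norm_eq_abs, abs_sub_comm r r'] using this
        · intro σ hσ
          rw [Real.norm_eq_abs, abs_of_nonneg (hnn σ θ)]
          refine (hub σ θ).trans (hUmono ?_)
          have hσ2 : σ ≤ max r' r := (Set.uIoc_subset_uIcc (by exact hσ)).2
          exact hσ2.trans (max_le hr' hr)
      have hBeq : ∀ r, B θ r = Q (r+1) - Q r := fun r => (hQsub (r+1) r).symm
      have h1 : |s - s₀| ≤ 1 := le_of_lt hs
      calc |B θ s - B θ s₀| = |(Q (s+1) - Q (s₀+1)) + (Q s₀ - Q s)| := by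
            rw [hBeq, hBeq]; ring_nf
      _ ≤ |Q (s+1) - Q (s₀+1)| + |Q s₀ - Q s| := abs_add_le _ _
      _ ≤ U (s₀+2) * |s + 1 - (s₀+1)| + U (s₀+2) * |s₀ - s| := by
            refine add_le_add (hQlip _ _ (by cases abs_le.1 h1; linarith) (by linarith)) ?_
            exact hQlip s₀ s (by linarith) (by cases abs_le.1 h1; linarith)
      _ = 2 * U (s₀+2) * |s - s₀| := by
            have e1 : |s + 1 - (s₀+1)| = |s - s₀| := by ring_nf
            have e2 : |s₀ - s| = |s - s₀| := abs_sub_comm _ _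
            rw [e1, e2]; ring
    have hsub : G s t - G s₀ t = ∫ θ in (t-1)..t, (B θ s - B θ s₀) := by
      rw [hG]
      exact (intervalIntegral.integral_sub ((hBanti s).intervalIntegrable)
        ((hBanti s₀).intervalIntegrable)).symm
    rw [hsub]
    have := intervalIntegral.norm_integral_le_of_norm_le_const
      (C := 2 * U (s₀+2) * |s - s₀|) (f := fun θ => B θ s - B θ s₀) (a := t-1) (b := t) ?_
    · have e : |t - (t-1)| = 1 := by norm_num
      rw [Real.norm_eq_abs] at this
      calc |∫ θ in (t-1)..t, (B θ s - B θ s₀)| ≤ 2 * U (s₀+2) * |s - s₀| * |t - (t-1)| := this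
      _ = 2 * U (s₀+2) * |s - s₀| := by rw [e, mul_one]
    · intro θ _
      rw [Real.norm_eq_abs]
      exact hBlip θ
  -- the KL function
  refine ⟨fun s t => min (β (max s 0) 0) (G s t) + max s 0 * Real.exp (-t), ⟨?_, ?_⟩, ?_⟩
  · -- class K in s for each t ≥ 0
    intro t _
    refine ⟨?_, ?_, ?_, ?_⟩
    · -- continuity in s on Ici 0
      have h1 : ContinuousOn (fun s => β (max s 0) 0) (Ici 0) := by
        refine ContinuousOn.congr ((hβ.1 0 le_rfl).1) ?_
        intro s hs
        simp [max_eq_left (mem_Ici.1 hs)]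
      have h2 : ContinuousOn (fun s => min (β (max s 0) 0) (G s t)) (Ici 0) :=
        fun x hx => Filter.Tendsto.min (h1 x hx) (((hGconts t).continuousOn) x hx)
      exact h2.add
        (((continuous_id.max continuous_const).continuousOn).mul continuous_const.continuousOn)
    · intro s₁ h₁ s₂ h₂ h
      have e1 : max s₁ 0 = s₁ := max_eq_left h₁
      have e2 : max s₂ 0 = s₂ := max_eq_left h₂
      have hm : β (max s₁ 0) 0 ≤ β (max s₂ 0) 0 := hUmono h.le
      dsimp only
      rw [e1, e2] at hm ⊢
      refine add_lt_add_of_le_of_lt (min_le_min hm (hGmono t h.le)) ?_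
      exact mul_lt_mul_of_pos_right h (Real.exp_pos _)
    · have hβ00 : β 0 0 = 0 := (hβ.1 0 le_rfl).2.2.1
      simp [hβ00, min_eq_left (hGnn 0 t)]
    · intro s _
      have hm : (0:ℝ) ≤ β (max s 0) 0 := hUnn s
      refine add_nonneg (le_min hm (hGnn s t)) ?_
      exact mul_nonneg (le_max_right _ _) (Real.exp_pos _).le
  · -- properties in t for each s ≥ 0
    intro s _
    refine ⟨?_, ?_, ?_⟩
    · exact ((continuous_const.min (hGcontt s)).add
        (continuous_const.mul (Real.continuous_exp.comp continuous_neg))).continuousOn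
    · intro t₁ _ t₂ _ h
      refine add_le_add (min_le_min le_rfl (hGanti s h)) ?_
      exact mul_le_mul_of_nonneg_left (Real.exp_le_exp.2 (neg_le_neg h)) (le_max_right _ _)
    · have h1 : Tendsto (fun t => min (β (max s 0) 0) (G s t)) atTop (nhds 0) := by
        refine squeeze_zero (g := fun t => Φ (s+1) (t-1)) (fun t => le_min (hUnn s) (hGnn s t)) ?_ ?_
        · intro t
          exact (min_le_right _ _).trans (hGdecay s t)
        · exact (hdec (s+1) (by positivity)).comp (tendsto_atTop_add_const_right _ (-1) tendsto_id)
      have h2 : Tendsto (fun t => max s 0 * Real.exp (-t)) atTop (nhds 0) := by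
        have := (Real.tendsto_exp_atBot).comp (tendsto_neg_atTop_atBot)
        simpa using this.const_mul (max s 0)
      simpa using h1.add h2
  · intro s t hs _
    refine le_trans (le_min (hub s t) (hGge s t)) ?_
    exact le_add_of_nonneg_right (mul_nonneg (le_max_right _ _) (Real.exp_pos _).le)


/-- **Small-gain theorem** (Theorem 1).  If every trajectory in `S` satisfies (H1)
and (H2), and the gain `γ` satisfies `γ(r) < r` for `r > r₀`, then there is a class-𝒦𝓛
function `β̃` such that every trajectory in `S` satisfies
`y(t) ≤ max {β̃(x(t₀), t−t₀), μᵐ(u,t₀,t), 3C, 3r₀}`, where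
`μᵐ(u,a,b) = max {β(σ₃(μᵃ(u,a,b)),0), β(μᵇ(u,a,b),0), μᵃ(u,a,b)}`. -/
theorem small_gain {U : Type*} (𝒯 : AddSubgroup ℝ)
    (μa μb : U → ℝ → ℝ → ℝ) (hμa : InputMeasure μa) (hμb : InputMeasure μb)
    (β : ℝ → ℝ → ℝ) (hβ : ClassKL β)
    (r0 : ℝ) (hr0 : 0 ≤ r0)
    (γ : ℝ → ℝ) (hγ : ClassK γ) (hγr : ∀ r, r0 < r → γ r < r)
    (σ1 σ2 σ3 : ℝ → ℝ) (hσ1 : ClassK σ1) (hσ2 : ClassK σ2) (hσ3 : ClassK σ3)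
    (d : ℝ) (hd : 0 ≤ d) (C : ℝ) (hC : 0 ≤ C)
    (S : Set (EReal × U × (ℝ → ℝ) × (ℝ → ℝ)))
    (hS : ∀ τ u x y, (τ, u, x, y) ∈ S → IsTraj 𝒯 τ x y)
    (hH1 : ∀ τ u x y, (τ, u, x, y) ∈ S → H1 𝒯 μa β γ C τ u x y)
    (hH2 : ∀ τ u x y, (τ, u, x, y) ∈ S → H2 𝒯 μb σ1 σ2 σ3 d τ u x y) :
    ∃ βt : ℝ → ℝ → ℝ, ClassKL βt ∧
      ∀ τ u x y, (τ, u, x, y) ∈ S →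
        ∀ t0 t : ℝ, t0 ∈ 𝒯 → t ∈ 𝒯 → 0 ≤ t0 → t0 ≤ t → (t : EReal) < τ →
          y t ≤ max (max (βt (x t0) (t - t0))
              (max (max (β (σ3 (μa u t0 t)) 0) (β (μb u t0 t) 0)) (μa u t0 t)))
            (max (3 * C) (3 * r0)) := by
  classical
  -- generic class-K helpers
  have hKmono : ∀ (g : ℝ → ℝ), ClassK g → ∀ a b : ℝ, 0 ≤ a → a ≤ b → g a ≤ g b :=
    fun g hg a b ha h => hg.2.1.monotoneOn ha (ha.trans h) h
  have hsplitK : ∀ (g : ℝ → ℝ), ClassK g → ∀ a b : ℝ, g (max a b) ≤ max (g a) (g b) := by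
    intro g hg a b
    rcases le_total a b with h | h
    · rw [max_eq_right h]; exact le_max_right _ _
    · rw [max_eq_left h]; exact le_max_left _ _
  have hβ0mono : ∀ a b : ℝ, 0 ≤ a → a ≤ b → β a 0 ≤ β b 0 :=
    fun a b ha h => hKmono (fun s => β s 0) (hβ.1 0 le_rfl) a b ha h
  have hβanti : ∀ s, 0 ≤ s → AntitoneOn (β s) (Ici 0) := fun s hs => (hβ.2 s hs).2.1
  have hβnn : ∀ a b : ℝ, 0 ≤ a → 0 ≤ b → 0 ≤ β a b :=
    fun a b ha hb => (hβ.1 b hb).2.2.2 a ha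
  -- γ r0 ≤ r0
  have hγr0 : γ r0 ≤ r0 := by
    rcases eq_or_lt_of_le hr0 with h | h
    · rw [← h]; rw [hγ.2.2.1]
    · have h2 : Tendsto γ (nhdsWithin r0 (Ioi r0)) (nhds (γ r0)) :=
        ((hγ.1 r0 hr0).mono_left (nhdsWithin_mono _ (fun z hz => le_of_lt (lt_of_le_of_lt hr0 hz))))
      have h3 : Tendsto (fun r : ℝ => r) (nhdsWithin r0 (Ioi r0)) (nhds r0) :=
        tendsto_id.mono_left nhdsWithin_le_nhds
      refine le_of_tendsto_of_tendsto h2 h3 ?_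
      exact eventually_mem_nhdsWithin.mono (fun r hr => (hγr r hr).le)
  -- key gain estimate
  have hγkey : ∀ a K m : ℝ, 0 ≤ a → r0 ≤ K → 0 ≤ m → m ≤ max a K →
      γ m ≤ max (γ (max a r0)) K := by
    intro a K m ha hK hm hmax
    have hK0 : 0 ≤ K := hr0.trans hK
    have h1 : γ m ≤ γ (max a K) := hKmono γ hγ m (max a K) hm hmax
    rcases le_total K a with h | h
    · rw [max_eq_left h] at h1
      exact h1.trans ((hKmono γ hγ a (max a r0) ha (le_max_left _ _)).trans (le_max_left _ _))
    · rw [max_eq_right h] at h1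
      rcases le_or_gt K r0 with h2 | h2
      · exact h1.trans (((hKmono γ hγ K r0 hK0 h2).trans (hγr0.trans hK)).trans (le_max_right _ _))
      · exact h1.trans ((hγr K h2).le.trans (le_max_right _ _))
  -- the grid lemma
  obtain ⟨δ, hδpos, hgrid⟩ : ∃ δ : ℝ, 0 < δ ∧ ∀ p a c : ℝ, a ∈ 𝒯 → c ∈ 𝒯 → a ≤ p → p + δ ≤ c →
      ∃ q, q ∈ 𝒯 ∧ p ≤ q ∧ q ≤ p + δ := by
    rcases AddSubgroup.dense_or_cyclic 𝒯 with hdense | ⟨g, hg⟩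
    · refine ⟨1, one_pos, fun p a c _ _ _ _ => ?_⟩
      obtain ⟨q, hq𝒯, hq⟩ := hdense.exists_between (by linarith : p < p + 1)
      exact ⟨q, hq𝒯, hq.1.le, hq.2.le⟩
    · rcases eq_or_ne g 0 with h0 | h0
      · refine ⟨1, one_pos, fun p a c ha hc hap hpc => ?_⟩
        exfalso
        rw [hg, h0] at ha hc
        simp only [AddSubgroup.mem_closure_singleton, smul_zero] at ha hc
        obtain ⟨n, hn⟩ := ha; obtain ⟨n', hn'⟩ := hc
        rw [← hn'] at hpc; rw [← hn] at hap
        linarith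
      · refine ⟨|g|, abs_pos.2 h0, fun p a c _ _ _ _ => ?_⟩
        have hgpos : 0 < |g| := abs_pos.2 h0
        have hg𝒯 : g ∈ 𝒯 := by rw [hg]; exact AddSubgroup.subset_closure rfl
        have habs : |g| ∈ 𝒯 := by
          rcases abs_cases g with ⟨h, _⟩ | ⟨h, _⟩
          · rw [h]; exact hg𝒯
          · rw [h]; exact neg_mem hg𝒯
        refine ⟨(⌈p / |g|⌉ : ℤ) * |g|, ?_, ?_, ?_⟩
        · have := AddSubgroup.zsmul_mem 𝒯 habs ⌈p / |g|⌉
          rwa [zsmul_eq_mul] at this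
        · rw [← div_le_iff₀ hgpos]
          exact Int.le_ceil _
        · have h1 : (⌈p / |g|⌉ : ℝ) < p / |g| + 1 := Int.ceil_lt_add_one _
          have h2 : (⌈p / |g|⌉ : ℝ) * |g| < (p / |g| + 1) * |g| := by
            exact mul_lt_mul_of_pos_right h1 hgpos
          rw [add_mul, div_mul_cancel₀ _ hgpos.ne'] at h2
          linarith
  -- supT helpers
  have hle_supT : ∀ τ u x y, (τ, u, x, y) ∈ S → ∀ a b s : ℝ, 0 ≤ a → a ≤ b → (b : EReal) < τ →
      s ∈ 𝒯 → s ∈ Icc a b → y s ≤ supT 𝒯 y a b := by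
    intro τ u x y hm a b s ha0 hab hbτ hs hsab
    exact le_csSup ((hS τ u x y hm).2.2 a b ha0 hab hbτ) ⟨s, ⟨hs, hsab⟩, rfl⟩
  have hsupT_le : ∀ τ u x y, (τ, u, x, y) ∈ S → ∀ a b c : ℝ, a ∈ 𝒯 → a ≤ b →
      (∀ s, s ∈ 𝒯 → s ∈ Icc a b → y s ≤ c) → supT 𝒯 y a b ≤ c := by
    intro τ u x y _ a b c ha hab h
    refine csSup_le ⟨y a, a, ⟨ha, le_rfl, hab⟩, rfl⟩ ?_
    rintro v ⟨s, hs, rfl⟩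
    exact h s hs.1 hs.2
  have hsupT_nn : ∀ τ u x y, (τ, u, x, y) ∈ S → ∀ a b : ℝ, a ∈ 𝒯 → 0 ≤ a → a ≤ b →
      (b : EReal) < τ → 0 ≤ supT 𝒯 y a b := by
    intro τ u x y hm a b ha ha0 hab hbτ
    have haτ : (a : EReal) < τ := lt_of_le_of_lt (EReal.coe_le_coe_iff.2 hab) hbτ
    exact le_trans ((hS τ u x y hm).2.1 a ha ha0 haτ).2
      (hle_supT τ u x y hm a b a ha0 hab hbτ ha ⟨le_rfl, hab⟩)
  have hsupT_mono : ∀ τ u x y, (τ, u, x, y) ∈ S → ∀ a b b' : ℝ, a ∈ 𝒯 → 0 ≤ a → a ≤ b →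
      b ≤ b' → (b' : EReal) < τ → supT 𝒯 y a b ≤ supT 𝒯 y a b' := by
    intro τ u x y hm a b b' ha ha0 hab hbb' hb'τ
    refine csSup_le_csSup ((hS τ u x y hm).2.2 a b' ha0 (hab.trans hbb') hb'τ)
      ⟨y a, a, ⟨ha, le_rfl, hab⟩, rfl⟩ ?_
    exact image_mono (f := y) (fun r hr => ⟨hr.1, hr.2.1, hr.2.2.trans hbb'⟩)
  -- uniform global stability
  have hUGS : ∀ τ u x y, (τ, u, x, y) ∈ S → ∀ a b : ℝ, a ∈ 𝒯 → b ∈ 𝒯 → 0 ≤ a → a ≤ b →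
      (b : EReal) < τ →
      supT 𝒯 y a b ≤ max (β (x a) 0) (max (μa u a b) (max C r0)) := by
    intro τ u x y hm a b ha hb ha0 hab hbτ
    have haτ : (a : EReal) < τ := lt_of_le_of_lt (EReal.coe_le_coe_iff.2 hab) hbτ
    have hxa : 0 ≤ x a := ((hS τ u x y hm).2.1 a ha ha0 haτ).1
    have key : supT 𝒯 y a b ≤ max (β (x a) 0) (max (γ (supT 𝒯 y a b)) (max (μa u a b) C)) := by
      refine hsupT_le τ u x y hm a b _ ha hab ?_
      intro s hs hsab
      have hsτ : (s : EReal) < τ := lt_of_le_of_lt (EReal.coe_le_coe_iff.2 hsab.2) hbτ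
      have h1 := hH1 τ u x y hm a s ha hs ha0 hsab.1 hsτ
      have hβle : β (x a) (s - a) ≤ β (x a) 0 :=
        hβanti (x a) hxa (mem_Ici.2 le_rfl) (by simp [hsab.1] : (s - a) ∈ Ici (0:ℝ)) (by linarith [hsab.1])
      have hsup_as : supT 𝒯 y a s ≤ supT 𝒯 y a b :=
        hsupT_mono τ u x y hm a s b ha ha0 hsab.1 hsab.2 hbτ
      have hsup_nn : 0 ≤ supT 𝒯 y a s := hsupT_nn τ u x y hm a s ha ha0 hsab.1 hsτ
      have hγle : γ (supT 𝒯 y a s) ≤ γ (supT 𝒯 y a b) :=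
        hKmono γ hγ _ _ hsup_nn hsup_as
      have hμle : μa u a s ≤ μa u a b := hμa.2 u a a s b ha0 le_rfl hsab.1 hsab.2
      refine h1.trans (max_le (max_le ?_ ?_) (max_le ?_ ?_))
      · exact hβle.trans (le_max_left _ _)
      · exact hγle.trans (le_max_of_le_right (le_max_left _ _))
      · exact hμle.trans (le_max_of_le_right (le_max_of_le_right (le_max_left _ _)))
      · exact le_max_of_le_right (le_max_of_le_right (le_max_right _ _))
    rcases le_or_gt (supT 𝒯 y a b) r0 with h | h
    · exact h.trans (le_max_of_le_right (le_max_of_le_right (le_max_right _ _)))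
    · rcases le_max_iff.1 key with h1 | h1
      · exact h1.trans (le_max_left _ _)
      · rcases le_max_iff.1 h1 with h2 | h2
        · exact absurd h2 (not_le.2 (hγr _ h))
        · exact h2.trans (le_max_of_le_right
            (max_le (le_max_left _ _) (le_max_of_le_right (le_max_left _ _))))
  -- the combined input bound
  set Kf : U → ℝ → ℝ → ℝ := fun u a b =>
    max (max (β (σ3 (μa u a b)) 0) (β (μb u a b) 0)) (max (μa u a b) (max C r0)) with hKfdef
  have hKfr0 : ∀ u a b, r0 ≤ Kf u a b :=
    fun u a b => le_max_of_le_right (le_max_of_le_right (le_max_right _ _))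
  have hKfC : ∀ u a b, C ≤ Kf u a b :=
    fun u a b => le_max_of_le_right (le_max_of_le_right (le_max_left _ _))
  have hKfμ : ∀ u a b, μa u a b ≤ Kf u a b :=
    fun u a b => le_max_of_le_right (le_max_left _ _)
  have hKfmono : ∀ u a b b', 0 ≤ a → a ≤ b → b ≤ b' → Kf u a b ≤ Kf u a b' := by
    intro u a b b' ha hab hbb'
    have hμ : μa u a b ≤ μa u a b' := hμa.2 u a a b b' ha le_rfl hab hbb'
    have hν : μb u a b ≤ μb u a b' := hμb.2 u a a b b' ha le_rfl hab hbb'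
    have hμnn : 0 ≤ μa u a b := hμa.1 u a b ha (ha.trans hab)
    have hνnn : 0 ≤ μb u a b := hμb.1 u a b ha (ha.trans hab)
    refine max_le_max (max_le_max ?_ ?_) (max_le_max hμ le_rfl)
    · exact hβ0mono _ _ (hσ3.2.2.2 _ hμnn) (hKmono σ3 hσ3 _ _ hμnn hμ)
    · exact hβ0mono _ _ hνnn hν
  -- uniform attractivity
  have hattr : ∀ R : ℝ, 0 ≤ R → ∀ η : ℝ, 0 < η → ∃ T : ℝ, 0 ≤ T ∧
      ∀ τ u x y, (τ, u, x, y) ∈ S → ∀ t0 t : ℝ, t0 ∈ 𝒯 → t ∈ 𝒯 → 0 ≤ t0 → t0 ≤ t →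
        (t : EReal) < τ → x t0 ≤ R → T ≤ t - t0 →
        y t ≤ max (max η (3 * r0)) (Kf u t0 t) := by
    intro R hR η hη
    -- choice of settling times
    have hWex : ∀ Z : ℝ, ∃ w : ℝ, 0 ≤ w ∧ β (max Z 0) w ≤ η := by
      intro Z
      have h1 : Tendsto (β (max Z 0)) atTop (nhds 0) := (hβ.2 (max Z 0) (le_max_right _ _)).2.2
      have h2 : ∀ᶠ w in atTop, β (max Z 0) w < η := h1.eventually_lt_const hη
      obtain ⟨w, hw1, hw2⟩ := (h2.and (eventually_ge_atTop (0:ℝ))).exists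
      exact ⟨w, hw2, hw1.le⟩
    set Zf : ℝ → ℝ := fun T => max (max (σ1 R) (σ2 (T + δ)))
      (max (max (σ3 (β R 0)) (σ3 C)) (max (σ3 r0) d)) with hZfdef
    have hZnn : ∀ T, 0 ≤ Zf T :=
      fun T => le_trans (hσ1.2.2.2 R hR) ((le_max_left _ _).trans (le_max_left _ _))
    set Wf : ℝ → ℝ := fun T => Classical.choose (hWex (Zf T)) with hWfdef
    have hWspec : ∀ T, 0 ≤ Wf T ∧ β (max (Zf T) 0) (Wf T) ≤ η :=
      fun T => Classical.choose_spec (hWex (Zf T))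
    -- the recursively defined schedule
    obtain ⟨f, hf0, hfs⟩ : ∃ f : ℕ → ℝ × ℝ, f 0 = ((0:ℝ), β R 0) ∧
        ∀ k, f (k + 1) = ((f k).1 + δ + Wf ((f k).1), max (γ (max ((f k).2) r0)) η) :=
      ⟨fun k => Nat.rec (motive := fun _ => ℝ × ℝ) ((0:ℝ), β R 0)
        (fun _ p => (p.1 + δ + Wf p.1, max (γ (max p.2 r0)) η)) k, rfl, fun _ => rfl⟩
    have hT0 : ∀ k, 0 ≤ (f k).1 := by
      intro k
      induction k with
      | zero => rw [hf0]
      | succ k ih => rw [hfs]; have := (hWspec (f k).1).1; dsimp only; linarith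
    have hb0 : ∀ k, 0 ≤ (f k).2 := by
      intro k
      cases k with
      | zero => rw [hf0]; exact hβnn R 0 hR le_rfl
      | succ k => rw [hfs]; exact le_max_of_le_right hη.le
    -- the inductive invariant
    have hInv : ∀ k, ∀ τ u x y, (τ, u, x, y) ∈ S → ∀ t0 s : ℝ, t0 ∈ 𝒯 → s ∈ 𝒯 → 0 ≤ t0 →
        t0 ≤ s → (s : EReal) < τ → x t0 ≤ R → (f k).1 ≤ s - t0 →
        y s ≤ max ((f k).2) (Kf u t0 s) := by
      intro k
      induction k with
      | zero =>
        intro τ u x y hm t0 s ht0 hs ht00 ht0s hsτ hxR _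
        have ht0τ : (t0 : EReal) < τ := lt_of_le_of_lt (EReal.coe_le_coe_iff.2 ht0s) hsτ
        have hxt00 : 0 ≤ x t0 := ((hS τ u x y hm).2.1 t0 ht0 ht00 ht0τ).1
        have hy : y s ≤ supT 𝒯 y t0 s :=
          hle_supT τ u x y hm t0 s s ht00 ht0s hsτ hs ⟨ht0s, le_rfl⟩
        have h2 := hUGS τ u x y hm t0 s ht0 hs ht00 ht0s hsτ
        rw [hf0]
        refine (hy.trans h2).trans (max_le ?_ (max_le ?_ (max_le ?_ ?_)))
        · exact le_max_of_le_left (hβ0mono _ _ hxt00 hxR)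
        · exact le_max_of_le_right (hKfμ u t0 s)
        · exact le_max_of_le_right (hKfC u t0 s)
        · exact le_max_of_le_right (hKfr0 u t0 s)
      | succ k ih =>
        intro τ u x y hm t0 s ht0 hs ht00 ht0s hsτ hxR hTs
        rw [hfs] at hTs
        dsimp only at hTs
        obtain ⟨hWk0, hWkβ⟩ := hWspec (f k).1
        obtain ⟨p, hp𝒯, hpl, hpu⟩ := hgrid (t0 + (f k).1) t0 s ht0 hs
          (by linarith [hT0 k]) (by linarith)
        have hp0 : 0 ≤ p := by linarith [hT0 k]
        have hps : p ≤ s := by linarith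
        have hpτ : (p : EReal) < τ := lt_of_le_of_lt (EReal.coe_le_coe_iff.2 hps) hsτ
        have ht0p : t0 ≤ p := by linarith [hT0 k]
        have ht0τ : (t0 : EReal) < τ := lt_of_le_of_lt (EReal.coe_le_coe_iff.2 ht0p) hpτ
        have hxt00 : 0 ≤ x t0 := ((hS τ u x y hm).2.1 t0 ht0 ht00 ht0τ).1
        have hxp0 : 0 ≤ x p := ((hS τ u x y hm).2.1 p hp𝒯 hp0 hpτ).1
        have h1 := hH1 τ u x y hm p s hp𝒯 hs hp0 hps hsτ
        have h2 := hH2 τ u x y hm t0 p ht0 hp𝒯 ht00 ht0p hpτ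
        have hμnn : 0 ≤ μa u t0 s := hμa.1 u t0 s ht00 (ht00.trans ht0s)
        have hνnn : 0 ≤ μb u t0 p := hμb.1 u t0 p ht00 hp0
        -- bound on x p
        have hMtp : supT 𝒯 y t0 p ≤ max (β R 0) (max (μa u t0 s) (max C r0)) := by
          refine (hUGS τ u x y hm t0 p ht0 hp𝒯 ht00 ht0p hpτ).trans ?_
          exact max_le_max (hβ0mono _ _ hxt00 hxR)
            (max_le_max (hμa.2 u t0 t0 p s ht00 le_rfl ht0p hps) le_rfl)
        have hMtp_nn : 0 ≤ supT 𝒯 y t0 p := hsupT_nn τ u x y hm t0 p ht0 ht00 ht0p hpτ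
        have hσ3M : σ3 (supT 𝒯 y t0 p) ≤
            max (max (σ3 (β R 0)) (σ3 (μa u t0 s))) (max (σ3 C) (σ3 r0)) := by
          refine (hKmono σ3 hσ3 _ _ hMtp_nn hMtp).trans ?_
          refine (hsplitK σ3 hσ3 _ _).trans ?_
          refine max_le ((le_max_left _ _).trans (le_max_left _ _)) ?_
          refine (hsplitK σ3 hσ3 _ _).trans ?_
          refine max_le ((le_max_right _ _).trans (le_max_left _ _)) ?_
          exact (hsplitK σ3 hσ3 _ _).trans (le_max_right _ _)
        have hxple : x p ≤ max (Zf ((f k).1)) (max (σ3 (μa u t0 s)) (μb u t0 p)) := by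
          refine h2.trans (max_le (max_le ?_ ?_) (max_le ?_ (max_le ?_ ?_)))
          · exact le_max_of_le_left ((hKmono σ1 hσ1 _ _ hxt00 hxR).trans
              ((le_max_left _ _).trans (le_max_left _ _)))
          · refine le_max_of_le_left ?_
            exact (hKmono σ2 hσ2 _ _ (by linarith) (by linarith : p - t0 ≤ (f k).1 + δ)).trans
              ((le_max_right _ _).trans (le_max_left _ _))
          · refine hσ3M.trans (max_le (max_le ?_ ?_) (max_le ?_ ?_))
            · exact le_max_of_le_left (le_max_of_le_right ((le_max_left _ _).trans (le_max_left _ _)))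
            · exact le_max_of_le_right (le_max_left _ _)
            · exact le_max_of_le_left (le_max_of_le_right ((le_max_right _ _).trans (le_max_left _ _)))
            · exact le_max_of_le_left (le_max_of_le_right ((le_max_left _ _).trans (le_max_right _ _)))
          · exact le_max_of_le_right (le_max_right _ _)
          · exact le_max_of_le_left (le_max_of_le_right ((le_max_right _ _).trans (le_max_right _ _)))
        -- the β-term
        have hβxp : β (x p) (s - p) ≤ max η (Kf u t0 s) := by
          have h3 : β (x p) (s - p) ≤ β (x p) (Wf ((f k).1)) :=
            hβanti (x p) hxp0 hWk0 (by simp; linarith : (s - p) ∈ Ici (0:ℝ)) (by linarith)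
          have h4 : β (x p) (Wf ((f k).1)) ≤
              β (max (Zf ((f k).1)) (max (σ3 (μa u t0 s)) (μb u t0 p))) (Wf ((f k).1)) :=
            hKmono (fun z => β z (Wf ((f k).1))) (hβ.1 _ hWk0) _ _ hxp0 hxple
          have h5 := hsplitK (fun z => β z (Wf ((f k).1))) (hβ.1 _ hWk0)
            (Zf ((f k).1)) (max (σ3 (μa u t0 s)) (μb u t0 p))
          have h6 := hsplitK (fun z => β z (Wf ((f k).1))) (hβ.1 _ hWk0)
            (σ3 (μa u t0 s)) (μb u t0 p)
          have hZη : β (Zf ((f k).1)) (Wf ((f k).1)) ≤ η := by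
            have := hWkβ; rwa [max_eq_left (hZnn ((f k).1))] at this
          have h7 : β (σ3 (μa u t0 s)) (Wf ((f k).1)) ≤ β (σ3 (μa u t0 s)) 0 :=
            hβanti _ (hσ3.2.2.2 _ hμnn) (mem_Ici.2 le_rfl) hWk0 hWk0
          have h8 : β (μb u t0 p) (Wf ((f k).1)) ≤ β (μb u t0 s) 0 := by
            refine (hβanti _ hνnn (mem_Ici.2 le_rfl) hWk0 hWk0).trans ?_
            exact hβ0mono _ _ hνnn (hμb.2 u t0 t0 p s ht00 le_rfl ht0p hps)
          refine ((h3.trans h4).trans h5).trans (max_le ?_ ?_)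
          · exact hZη.trans (le_max_left _ _)
          · refine h6.trans (max_le ?_ ?_)
            · exact le_max_of_le_right (h7.trans (le_max_of_le_left (le_max_left _ _)))
            · exact le_max_of_le_right (h8.trans (le_max_of_le_left (le_max_right _ _)))
        -- the γ-term
        have hMps_nn : 0 ≤ supT 𝒯 y p s := hsupT_nn τ u x y hm p s hp𝒯 hp0 hps hsτ
        have hMps : supT 𝒯 y p s ≤ max ((f k).2) (Kf u t0 s) := by
          refine hsupT_le τ u x y hm p s _ hp𝒯 hps ?_
          intro r hr𝒯 hrps
          have hrτ : (r : EReal) < τ := lt_of_le_of_lt (EReal.coe_le_coe_iff.2 hrps.2) hsτ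
          have h9 := ih τ u x y hm t0 r ht0 hr𝒯 ht00 (ht0p.trans hrps.1) hrτ hxR
            (by linarith [hrps.1])
          exact h9.trans (max_le_max le_rfl
            (hKfmono u t0 r s ht00 (ht0p.trans hrps.1) hrps.2))
        have hγterm : γ (supT 𝒯 y p s) ≤ max (γ (max ((f k).2) r0)) (Kf u t0 s) :=
          hγkey ((f k).2) (Kf u t0 s) _ (hb0 k) (hKfr0 u t0 s) hMps_nn hMps
        have hμps : μa u p s ≤ μa u t0 s := hμa.2 u t0 p s s ht00 ht0p hps le_rfl
        rw [hfs]
        dsimp only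
        refine h1.trans (max_le (max_le ?_ ?_) (max_le ?_ ?_))
        · exact hβxp.trans (max_le (le_max_of_le_left (le_max_right _ _)) (le_max_right _ _))
        · exact hγterm.trans (max_le (le_max_of_le_left (le_max_left _ _)) (le_max_right _ _))
        · exact le_max_of_le_right (hμps.trans (hKfμ u t0 s))
        · exact le_max_of_le_right (hKfC u t0 s)
    -- the schedule eventually yields bound max η (3 r0)
    have hbk : ∃ k, (f k).2 ≤ max η (3 * r0) := by
      by_contra hcon
      push_neg at hcon
      set m' := max η (3 * r0) with hm'def
      have hm'pos : 0 < m' := lt_of_lt_of_le hη (le_max_left _ _)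
      have hr0m : r0 ≤ m' := le_max_of_le_right (by linarith)
      have hrec : ∀ k, (f (k + 1)).2 = max (γ ((f k).2)) η := by
        intro k
        rw [hfs]
        dsimp only
        rw [max_eq_left (hr0m.trans (hcon k).le)]
      have hr0lt : ∀ k, r0 < (f k).2 := by
        intro k
        rcases eq_or_lt_of_le hr0 with h | h
        · rw [← h]; exact lt_of_lt_of_le hm'pos (hcon k).le
        · exact lt_of_lt_of_le (by linarith [le_max_right η (3*r0)] : r0 < m') (hcon k).le
      have hanti : Antitone (fun k => (f k).2) := by
        refine antitone_nat_of_succ_le (fun k => ?_)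
        rw [hrec]
        refine max_le (hγr _ (hr0lt k)).le ?_
        exact ((le_max_left η (3*r0)).trans (hcon k).le)
      have hbdd : BddBelow (range fun k => (f k).2) := by
        refine ⟨m', ?_⟩
        rintro v ⟨k, rfl⟩
        exact (hcon k).le
      have htend : Tendsto (fun k => (f k).2) atTop (nhds (⨅ k, (f k).2)) :=
        tendsto_atTop_ciInf hanti hbdd
      set L := ⨅ k, (f k).2 with hLdef
      have hLge : m' ≤ L := le_ciInf (fun k => (hcon k).le)
      have hL0 : 0 ≤ L := hm'pos.le.trans hLge
      have hγct : Tendsto (fun k => γ ((f k).2)) atTop (nhds (γ L)) := by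
        have hcw : ContinuousWithinAt γ (Ici 0) L := hγ.1 L hL0
        refine hcw.tendsto.comp ?_
        refine tendsto_nhdsWithin_of_tendsto_nhds_of_eventually_within _ htend ?_
        exact Eventually.of_forall (fun k => hb0 k)
      have htend2 : Tendsto (fun k => (f (k + 1)).2) atTop (nhds L) :=
        htend.comp (tendsto_add_atTop_nat 1)
      have htend3 : Tendsto (fun k => max (γ ((f k).2)) η) atTop (nhds (max (γ L) η)) :=
        hγct.max tendsto_const_nhds
      have he : (fun k => (f (k + 1)).2) = fun k => max (γ ((f k).2)) η := funext hrec
      rw [he] at htend2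
      have hLeq : L = max (γ L) η := tendsto_nhds_unique htend2 htend3
      have hr0L : r0 < L := by
        rcases eq_or_lt_of_le hr0 with h | h
        · rw [← h]; exact lt_of_lt_of_le hη (hLge.trans' (le_max_left _ _))
        · exact lt_of_lt_of_le (by linarith [le_max_right η (3*r0)] : r0 < m') hLge
      have hγL : γ L < L := hγr L hr0L
      have hLη : L = η := by
        rcases le_total (γ L) η with h | h
        · rw [max_eq_right h] at hLeq; exact hLeq
        · rw [max_eq_left h] at hLeq; exact absurd hLeq.symm hγL.ne
      have hev : ∀ᶠ k in atTop, γ ((f k).2) < η := by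
        refine hγct.eventually_lt_const ?_
        rw [← hLη]; exact hγL
      obtain ⟨k, hk⟩ := hev.exists
      have h10 : (f (k + 1)).2 = η := by rw [hrec]; exact max_eq_right hk.le
      have h11 := hcon (k + 1)
      rw [h10] at h11
      exact absurd (le_max_left η (3 * r0)) (not_le.2 h11)
    obtain ⟨k, hk⟩ := hbk
    refine ⟨(f k).1, hT0 k, ?_⟩
    intro τ u x y hm t0 t ht0 ht ht00 ht0t htτ hxR hT
    exact (hInv k τ u x y hm t0 t ht0 ht ht00 ht0t htτ hxR hT).trans (max_le_max hk le_rfl)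
  -- the reference bound for the KL construction
  set K3 : U → ℝ → ℝ → ℝ := fun u a b =>
    max (max (max (β (σ3 (μa u a b)) 0) (β (μb u a b) 0)) (μa u a b)) (max (3 * C) (3 * r0))
    with hK3def
  have hKfK3 : ∀ u a b, Kf u a b ≤ K3 u a b := by
    intro u a b
    refine max_le ?_ (max_le ?_ (max_le ?_ ?_))
    · exact le_max_of_le_left (le_max_left _ _)
    · exact le_max_of_le_left (le_max_right _ _)
    · exact le_max_of_le_right (le_max_of_le_left (by linarith))
    · exact le_max_of_le_right (le_max_of_le_right (by linarith))
  -- the set-valued overshoot function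
  set V : ℝ → ℝ → Set ℝ := fun R T => {v | ∃ τ u x y, (τ, u, x, y) ∈ S ∧ ∃ t0 t : ℝ,
    t0 ∈ 𝒯 ∧ t ∈ 𝒯 ∧ 0 ≤ t0 ∧ t0 ≤ t ∧ (t : EReal) < τ ∧ x t0 ≤ R ∧ T ≤ t - t0 ∧
    K3 u t0 t < v ∧ v = y t} with hVdef
  have hVub : ∀ R T v, v ∈ V R T → v ≤ β (max R 0) 0 := by
    rintro R T v ⟨τ, u, x, y, hm, t0, t, ht0, ht, ht00, ht0t, htτ, hxR, hT, hK3v, rfl⟩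
    have ht0τ : (t0 : EReal) < τ := lt_of_le_of_lt (EReal.coe_le_coe_iff.2 ht0t) htτ
    have hxt00 : 0 ≤ x t0 := ((hS τ u x y hm).2.1 t0 ht0 ht00 ht0τ).1
    have hy : y t ≤ supT 𝒯 y t0 t := hle_supT τ u x y hm t0 t t ht00 ht0t htτ ht ⟨ht0t, le_rfl⟩
    have h2 := hy.trans (hUGS τ u x y hm t0 t ht0 ht ht00 ht0t htτ)
    rcases le_max_iff.1 h2 with h3 | h3
    · exact h3.trans (hβ0mono _ _ hxt00 (hxR.trans (le_max_left _ _)))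
    · exfalso
      have h4 : max (μa u t0 t) (max C r0) ≤ K3 u t0 t := by
        refine max_le ?_ (max_le ?_ ?_)
        · exact le_max_of_le_left (le_max_right _ _)
        · exact le_max_of_le_right (le_max_of_le_left (by linarith))
        · exact le_max_of_le_right (le_max_of_le_right (by linarith))
      exact absurd (h3.trans h4) (not_le.2 hK3v)
  set Φ : ℝ → ℝ → ℝ := fun R T => sSup (insert 0 (V R T)) with hΦdef
  have hΦbdd : ∀ R T, BddAbove (insert (0:ℝ) (V R T)) := by
    intro R T
    refine ⟨max 0 (β (max R 0) 0), ?_⟩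
    rintro v (rfl | hv)
    · exact le_max_left _ _
    · exact (hVub R T v hv).trans (le_max_right _ _)
  have hΦnn : ∀ R T, 0 ≤ Φ R T := fun R T => le_csSup (hΦbdd R T) (mem_insert 0 _)
  have hΦmono : ∀ T, Monotone (fun R => Φ R T) := by
    intro T R R' hRR'
    refine csSup_le_csSup (hΦbdd R' T) ⟨0, mem_insert 0 _⟩ (insert_subset_insert ?_)
    rintro v ⟨τ, u, x, y, hm, t0, t, h1, h2, h3, h4, h5, h6, h7, h8, h9⟩
    exact ⟨τ, u, x, y, hm, t0, t, h1, h2, h3, h4, h5, h6.trans hRR', h7, h8, h9⟩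
  have hΦanti : ∀ R, Antitone (Φ R) := by
    intro R T T' hTT'
    refine csSup_le_csSup (hΦbdd R T) ⟨0, mem_insert 0 _⟩ (insert_subset_insert ?_)
    rintro v ⟨τ, u, x, y, hm, t0, t, h1, h2, h3, h4, h5, h6, h7, h8, h9⟩
    exact ⟨τ, u, x, y, hm, t0, t, h1, h2, h3, h4, h5, h6, hTT'.trans h7, h8, h9⟩
  have hΦub : ∀ R T, Φ R T ≤ β (max R 0) 0 := by
    intro R T
    refine csSup_le ⟨0, mem_insert 0 _⟩ ?_
    rintro v (rfl | hv)
    · exact hβnn _ _ (le_max_right _ _) le_rfl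
    · exact hVub R T v hv
  have hΦsmall : ∀ R, 0 ≤ R → ∀ η : ℝ, 0 < η → ∃ T : ℝ, Φ R T ≤ η := by
    intro R hR η hη
    obtain ⟨T, hT0', hT⟩ := hattr R hR η hη
    refine ⟨T, csSup_le ⟨0, mem_insert 0 _⟩ ?_⟩
    rintro v (rfl | ⟨τ, u, x, y, hm, t0, t, h1, h2, h3, h4, h5, h6, h7, h8, rfl⟩)
    · exact hη.le
    · have h9 := hT τ u x y hm t0 t h1 h2 h3 h4 h5 h6 h7
      rcases le_max_iff.1 h9 with h10 | h10
      · rcases le_max_iff.1 h10 with h11 | h11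
        · exact h11
        · exfalso
          have : 3 * r0 ≤ K3 u t0 t := le_max_of_le_right (le_max_right _ _)
          linarith
      · exfalso
        have := h10.trans (hKfK3 u t0 t)
        linarith
  have hΦdec : ∀ R, 0 ≤ R → Tendsto (Φ R) atTop (nhds 0) := by
    intro R hR
    have hbdd : BddBelow (range (Φ R)) := ⟨0, by rintro v ⟨T, rfl⟩; exact hΦnn R T⟩
    have htend : Tendsto (Φ R) atTop (nhds (⨅ T, Φ R T)) :=
      tendsto_atTop_ciInf (hΦanti R) hbdd
    have h0le : 0 ≤ ⨅ T, Φ R T := le_ciInf (fun T => hΦnn R T)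
    have hle0 : (⨅ T, Φ R T) ≤ 0 := by
      by_contra h
      push_neg at h
      obtain ⟨T, hT⟩ := hΦsmall R hR ((⨅ T, Φ R T) / 2) (by linarith)
      have h2 := ciInf_le hbdd T
      linarith
    rw [show (0:ℝ) = ⨅ T, Φ R T from le_antisymm h0le hle0]
    exact htend
  obtain ⟨βt, hβtKL, hβtΦ⟩ := exists_KL_bound β hβ Φ hΦmono hΦanti hΦnn hΦub hΦdec
  refine ⟨βt, hβtKL, ?_⟩
  intro τ u x y hm t0 t ht0 ht ht00 ht0t htτ
  rcases le_or_gt (y t) (K3 u t0 t) with h | h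
  · exact h.trans (max_le (le_max_of_le_left (le_max_right _ _)) (le_max_right _ _))
  · have ht0τ : (t0 : EReal) < τ := lt_of_le_of_lt (EReal.coe_le_coe_iff.2 ht0t) htτ
    have hxt00 : 0 ≤ x t0 := ((hS τ u x y hm).2.1 t0 ht0 ht00 ht0τ).1
    have hv : y t ∈ V (x t0) (t - t0) :=
      ⟨τ, u, x, y, hm, t0, t, ht0, ht, ht00, ht0t, htτ, le_rfl, le_rfl, h, rfl⟩
    have h1 : y t ≤ Φ (x t0) (t - t0) := le_csSup (hΦbdd _ _) (mem_insert_of_mem _ hv)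
    have h2 : Φ (x t0) (t - t0) ≤ βt (x t0) (t - t0) := hβtΦ _ _ hxt00 (by linarith)
    exact (h1.trans h2).trans (le_max_of_le_left (le_max_left _ _))
end

section
/- Suppose given a function δ of class 𝒦∞, a constant C ≥ 0, and a function T : (C,∞) × (0,∞) → [0,∞) satisfying: (a) T is nondecreasing in its second argument, i.e., for all ε > C, r₁ < r₂ implies T(ε,r₁) ≤ T(ε,r₂); and (b) for every r > 0, T(ε,r) → +∞ as ε decreases to C. Then there exists a function β of class 𝒦𝓛 with the following property: for each r > 0 and each t ≥ 0 there exists some ε in the set A_{r,t} := {ε ∈ (C,∞) : T(ε,r) ≤ t} ∪ {∞} such that min{ε − 2C, δ⁻¹(r)} ≤ β(r,t) (where min{∞ − 2C, δ⁻¹(r)} is understood as δ⁻¹(r)). -/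
open Set Filter

namespace LemA2Aux

noncomputable def clamp01 (x : ℝ) : ℝ := max 0 (min 1 x)
lemma clamp01_nonneg (x : ℝ) : 0 ≤ clamp01 x := le_max_left _ _
lemma clamp01_le_one (x : ℝ) : clamp01 x ≤ 1 := max_le zero_le_one (min_le_left _ _)
lemma clamp01_mono : Monotone clamp01 :=
  fun _ _ h => max_le_max le_rfl (min_le_min le_rfl h)
lemma clamp01_continuous : Continuous clamp01 :=
  continuous_const.max (continuous_const.min continuous_id)
lemma clamp01_eq_one {x : ℝ} (h : 1 ≤ x) : clamp01 x = 1 := by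
  unfold clamp01; rw [min_eq_left h, max_eq_right zero_le_one]
lemma clamp01_eq_zero {x : ℝ} (h : x ≤ 0) : clamp01 x = 0 := by
  unfold clamp01; rw [min_eq_right (le_trans h zero_le_one), max_eq_left h]

/-- Telescoping tail sum. -/
lemma hasSum_tail (g : ℕ → ℝ) (hmono : ∀ n, g (n+1) ≤ g n)
    (h0 : Tendsto g atTop (nhds 0)) (N : ℕ) :
    HasSum (fun n => if N ≤ n then g n - g (n+1) else 0) (g N) := by
  have hnn : ∀ n : ℕ, 0 ≤ (if N ≤ n then g n - g (n+1) else 0) := by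
    intro n; split
    · linarith [hmono n]
    · exact le_rfl
  rw [hasSum_iff_tendsto_nat_of_nonneg hnn]
  have key : ∀ M : ℕ, ∑ i ∈ Finset.range (N + M),
      (if N ≤ i then g i - g (i+1) else 0) = g N - g (N + M) := by
    intro M
    induction M with
    | zero =>
      simp only [Nat.add_zero, sub_self]
      apply Finset.sum_eq_zero
      intro i hi
      rw [if_neg]
      exact fun h => absurd (Finset.mem_range.1 hi) (not_lt.2 h)
    | succ M ih =>
      rw [← Nat.add_assoc, Finset.sum_range_succ, ih, if_pos (Nat.le_add_right N M)]
      ring_nf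
  have h2 : Tendsto (fun M : ℕ => ∑ i ∈ Finset.range (N + M),
      (if N ≤ i then g i - g (i+1) else 0)) atTop (nhds (g N)) := by
    simp only [key]
    have : Tendsto (fun M : ℕ => g (N + M)) atTop (nhds 0) := by
      have := h0.comp (tendsto_add_atTop_nat N)
      simpa [Function.comp_def, Nat.add_comm] using this
    simpa using tendsto_const_nhds.sub this
  rw [← tendsto_add_atTop_iff_nat N]
  simpa [Nat.add_comm] using h2

lemma min_sub_min_le {x a b : ℝ} (h : b ≤ a) : min x a - min x b ≤ a - b := by
  rcases le_total x b with h1 | h1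
  · rw [min_eq_left (h1.trans h), min_eq_left h1]; linarith
  · rw [min_eq_right h1]
    rcases le_total x a with h2 | h2
    · rw [min_eq_left h2]; linarith
    · rw [min_eq_right h2]

lemma min_sub_min_mono {x y a b : ℝ} (h : b ≤ a) (hxy : x ≤ y) :
    min x a - min x b ≤ min y a - min y b := by
  simp only [min_def]
  split_ifs <;> linarith

lemma sub_min_mono {x y c : ℝ} (hxy : x ≤ y) : x - min x c ≤ y - min y c := by
  simp only [min_def]
  split_ifs <;> linarith

lemma half_pow_succ_le (m : ℕ) : ((1:ℝ)/2)^(m+1) ≤ (1/2)^m := by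
  rw [pow_succ]
  nlinarith [pow_pos (by norm_num : (0:ℝ) < 1/2) m]

lemma half_pow_tendsto : Tendsto (fun n : ℕ => ((1:ℝ)/2)^(n+1)) atTop (nhds 0) := by
  have h := tendsto_pow_atTop_nhds_zero_of_lt_one
    (by norm_num : (0:ℝ) ≤ 1/2) (by norm_num : (1:ℝ)/2 < 1)
  exact h.comp (tendsto_add_atTop_nat 1)

lemma half_pow_summable : Summable (fun n : ℕ => ((1:ℝ)/2)^(n+1)) := by
  have h := summable_geometric_of_lt_one (by norm_num : (0:ℝ) ≤ 1/2) (by norm_num : (1:ℝ)/2 < 1)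
  exact ((h.mul_right (1/2)).congr fun n => (pow_succ _ _).symm)

noncomputable def Dfun (δinv : ℝ → ℝ) (r : ℝ) : ℝ := δinv (max r 0)

section D
variable {δ δinv : ℝ → ℝ}
variable (hδ : ClassKInf δ)
  (hδinv : ∀ s, 0 ≤ s → 0 ≤ δinv s ∧ δ (δinv s) = s)
  (hδinv' : ∀ s, 0 ≤ s → δinv (δ s) = s)

include hδ hδinv in
lemma δinv_mono : ∀ a b : ℝ, 0 ≤ a → a ≤ b → δinv a ≤ δinv b := by
  intro a b ha hab
  by_contra h
  push_neg at h
  have h1 : δ (δinv b) < δ (δinv a) :=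
    hδ.1.2.1 (hδinv b (ha.trans hab)).1 (hδinv a ha).1 h
  rw [(hδinv a ha).2, (hδinv b (ha.trans hab)).2] at h1
  linarith

include hδ hδinv in
lemma δinv_strictMono : ∀ a b : ℝ, 0 ≤ a → a < b → δinv a < δinv b := by
  intro a b ha hab
  rcases lt_or_eq_of_le (δinv_mono hδ hδinv a b ha hab.le) with h | h
  · exact h
  · exfalso
    have := (hδinv a ha).2
    rw [h, (hδinv b (ha.trans hab.le)).2] at this
    linarith

include hδ hδinv hδinv' in
lemma Dfun_continuous : Continuous (Dfun δinv) := by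
  set g : ℝ → ℝ := fun x => if 0 ≤ x then δinv x else -δinv (-x) with hg
  have hδnn : ∀ s, 0 ≤ s → 0 ≤ δ s := hδ.1.2.2.2
  have hgval : ∀ x, 0 ≤ x → g x = δinv x := fun x hx => if_pos hx
  have hgmono : Monotone g := by
    intro a b hab
    rcases le_or_gt 0 a with ha | ha
    · rw [hgval a ha, hgval b (ha.trans hab)]
      exact δinv_mono hδ hδinv a b ha hab
    · rcases le_or_gt 0 b with hb | hb
      · rw [hgval b hb, hg]
        simp only [if_neg (not_le.2 ha)]
        have h1 : 0 ≤ δinv (-a) := (hδinv _ (by linarith)).1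
        have h2 : 0 ≤ δinv b := (hδinv _ hb).1
        linarith
      · rw [hg]
        simp only [if_neg (not_le.2 ha), if_neg (not_le.2 hb)]
        have := δinv_mono hδ hδinv (-b) (-a) (by linarith) (by linarith)
        linarith
  have hgsurj : Function.Surjective g := by
    intro y
    rcases le_or_gt 0 y with hy | hy
    · exact ⟨δ y, by rw [hgval _ (hδnn y hy), hδinv' y hy]⟩
    · refine ⟨-δ (-y), ?_⟩
      have h1 : 0 < δ (-y) := by
        have := hδ.1.2.1 (le_refl (0:ℝ)) (le_of_lt (neg_pos.2 hy)) (neg_pos.2 hy)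
        rwa [hδ.1.2.2.1] at this
      rw [hg]
      simp only [if_neg (not_le.2 (by linarith : -δ (-y) < 0)), neg_neg]
      rw [hδinv' (-y) (by linarith)]
      ring
  have hgcont : Continuous g := Monotone.continuous_of_surjective hgmono hgsurj
  have : Dfun δinv = fun r => g (max r 0) := by
    funext r
    rw [Dfun, hgval _ (le_max_right _ _)]
  rw [this]
  exact hgcont.comp (continuous_id.max continuous_const)

include hδinv in
omit hδ in
lemma Dfun_nonneg (r : ℝ) : 0 ≤ Dfun δinv r := (hδinv _ (le_max_right _ _)).1

include hδ hδinv in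
lemma Dfun_mono : Monotone (Dfun δinv) := fun a b hab =>
  δinv_mono hδ hδinv _ _ (le_max_right _ _) (max_le_max hab le_rfl)

include hδ hδinv in
lemma Dfun_strictMonoOn : StrictMonoOn (Dfun δinv) (Ici 0) := by
  intro a ha b hb hab
  unfold Dfun
  rw [max_eq_left ha.out, max_eq_left hb.out]
  exact δinv_strictMono hδ hδinv a b ha.out hab

include hδ hδinv in
lemma Dfun_zero : Dfun δinv 0 = 0 := by
  have h1 : δ (δinv 0) = δ 0 := by rw [(hδinv 0 le_rfl).2, hδ.1.2.2.1]
  have h2 : δinv 0 = 0 :=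
    hδ.1.2.1.injOn (mem_Ici.mpr (hδinv 0 le_rfl).1) (mem_Ici.mpr le_rfl) h1
  unfold Dfun
  rw [max_self]
  exact h2

end D

section S

variable (C : ℝ) (Tf : ℝ → ℝ → ℝ)

/-- grid values -/
noncomputable def Afun (k j : ℕ) : ℝ := Tf (C + (1/2)^k) ((j : ℝ) + 1)

/-- continuous piecewise-linear monotone majorant of `r ↦ Tf (C + 2⁻ⁿ) r`. -/
noncomputable def Sfun (n : ℕ) (r : ℝ) : ℝ :=
  ((n : ℝ) + ∑ k ∈ Finset.range (n+1), Afun C Tf k 0) +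
  ∑' j : ℕ, (∑ k ∈ Finset.range (n+1), Afun C Tf k (j+1)) * clamp01 (r - j)

variable {C Tf}
variable (hTnn : ∀ ε r : ℝ, C < ε → 0 < r → 0 ≤ Tf ε r)
  (hTmono : ∀ ε : ℝ, C < ε → ∀ r1 r2 : ℝ, 0 < r1 → r1 < r2 → Tf ε r1 ≤ Tf ε r2)

include hTnn in
lemma Afun_nonneg (k j : ℕ) : 0 ≤ Afun C Tf k j := by
  apply hTnn
  · have : (0:ℝ) < (1/2)^k := by positivity
    linarith
  · positivity

include hTnn in
lemma Sterm_nonneg (n : ℕ) (r : ℝ) (j : ℕ) :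
    0 ≤ (∑ k ∈ Finset.range (n+1), Afun C Tf k (j+1)) * clamp01 (r - j) :=
  mul_nonneg (Finset.sum_nonneg fun k _ => Afun_nonneg hTnn k _) (clamp01_nonneg _)

lemma Ssummand_eq_zero {r : ℝ} {j : ℕ} (h : r ≤ j) (n : ℕ) :
    (∑ k ∈ Finset.range (n+1), Afun C Tf k (j+1)) * clamp01 (r - j) = 0 := by
  rw [clamp01_eq_zero (by linarith), mul_zero]

lemma Ssummable (n : ℕ) (r : ℝ) :
    Summable (fun j : ℕ => (∑ k ∈ Finset.range (n+1), Afun C Tf k (j+1)) * clamp01 (r - j)) := by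
  apply summable_of_ne_finset_zero (s := Finset.range ⌈max r 0⌉₊)
  intro j hj
  apply Ssummand_eq_zero
  have h1 : (⌈max r 0⌉₊ : ℝ) ≤ j := by
    exact_mod_cast Nat.cast_le.mpr (not_lt.1 fun h => hj (Finset.mem_range.2 h))
  calc r ≤ max r 0 := le_max_left _ _
    _ ≤ (⌈max r 0⌉₊ : ℝ) := Nat.le_ceil _
    _ ≤ j := h1

include hTnn in
lemma Sfun_mono_r (n : ℕ) : Monotone (Sfun C Tf n) := by
  intro r1 r2 h
  unfold Sfun
  refine add_le_add le_rfl ?_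
  apply Summable.tsum_le_tsum _ (Ssummable n r1) (Ssummable n r2)
  intro j
  apply mul_le_mul_of_nonneg_left (clamp01_mono (by linarith))
    (Finset.sum_nonneg fun k _ => Afun_nonneg hTnn k _)

include hTnn in
lemma Sfun_mono_n (r : ℝ) : Monotone (fun n => Sfun C Tf n r) := by
  apply monotone_nat_of_le_succ
  intro n
  unfold Sfun
  have h1 : (n:ℝ) ≤ ((n+1 : ℕ):ℝ) := by exact_mod_cast Nat.le_succ n
  have h2 : ∑ k ∈ Finset.range (n+1), Afun C Tf k 0 ≤ ∑ k ∈ Finset.range (n+1+1), Afun C Tf k 0 :=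
    Finset.sum_le_sum_of_subset_of_nonneg
      (Finset.range_subset_range.2 (Nat.le_succ _)) (fun k _ _ => Afun_nonneg hTnn k _)
  have h3 : ∑' j : ℕ, (∑ k ∈ Finset.range (n+1), Afun C Tf k (j+1)) * clamp01 (r - j) ≤
      ∑' j : ℕ, (∑ k ∈ Finset.range (n+1+1), Afun C Tf k (j+1)) * clamp01 (r - j) := by
    apply Summable.tsum_le_tsum _ (Ssummable n r) (Ssummable (n+1) r)
    intro j
    apply mul_le_mul_of_nonneg_right _ (clamp01_nonneg _)
    exact Finset.sum_le_sum_of_subset_of_nonneg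
      (Finset.range_subset_range.2 (Nat.le_succ _)) (fun k _ _ => Afun_nonneg hTnn k _)
  linarith

include hTnn in
lemma Sfun_ge_n (n : ℕ) (r : ℝ) : (n : ℝ) ≤ Sfun C Tf n r := by
  unfold Sfun
  have h1 : 0 ≤ ∑ k ∈ Finset.range (n+1), Afun C Tf k 0 :=
    Finset.sum_nonneg fun k _ => Afun_nonneg hTnn k _
  have h2 : 0 ≤ ∑' j : ℕ, (∑ k ∈ Finset.range (n+1), Afun C Tf k (j+1)) * clamp01 (r - j) :=
    tsum_nonneg fun j => Sterm_nonneg hTnn n r j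
  linarith

include hTnn hTmono in
lemma Sfun_ge_Tf (n : ℕ) {r : ℝ} (hr : 0 < r) : Tf (C + (1/2)^n) r ≤ Sfun C Tf n r := by
  have hCe : C < C + (1/2)^n := by
    have : (0:ℝ) < (1/2)^n := by positivity
    linarith
  have hrm : r < (⌊r⌋₊ : ℝ) + 1 := Nat.lt_floor_add_one r
  generalize hm : ⌊r⌋₊ = m at hrm
  have htsum_nonneg : 0 ≤ ∑' j : ℕ, (∑ k ∈ Finset.range (n+1), Afun C Tf k (j+1)) * clamp01 (r - j) :=
    tsum_nonneg fun j => Sterm_nonneg hTnn n r j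
  have hkey : Afun C Tf n m ≤ Sfun C Tf n r := by
    rcases Nat.eq_zero_or_pos m with h0 | hpos
    · unfold Sfun
      have : Afun C Tf n 0 ≤ ∑ k ∈ Finset.range (n+1), Afun C Tf k 0 :=
        Finset.single_le_sum (f := fun k => Afun C Tf k 0)
          (fun k _ => Afun_nonneg hTnn k _) (Finset.self_mem_range_succ n)
      rw [h0]
      have hn : (0:ℝ) ≤ n := Nat.cast_nonneg n
      linarith
    · obtain ⟨j, rfl⟩ : ∃ j, m = j + 1 := ⟨m - 1, (Nat.succ_pred_eq_of_pos hpos).symm⟩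
      have hterm : Afun C Tf n (j+1) ≤
          (∑ k ∈ Finset.range (n+1), Afun C Tf k (j+1)) * clamp01 (r - j) := by
        have hclamp : clamp01 (r - j) = 1 := by
          apply clamp01_eq_one
          have : ((j:ℝ) + 1) ≤ r := by
            have h5 := Nat.floor_le (le_of_lt hr)
            rw [hm] at h5
            push_cast at h5 ⊢
            linarith
          linarith
        rw [hclamp, mul_one]
        exact Finset.single_le_sum (f := fun k => Afun C Tf k (j+1))
          (fun k _ => Afun_nonneg hTnn k _) (Finset.self_mem_range_succ n)
      have hle : (∑ k ∈ Finset.range (n+1), Afun C Tf k (j+1)) * clamp01 (r - j) ≤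
          ∑' j' : ℕ, (∑ k ∈ Finset.range (n+1), Afun C Tf k (j'+1)) * clamp01 (r - j') :=
        Summable.le_tsum (Ssummable n r) j (fun j' _ => Sterm_nonneg hTnn n r j')
      unfold Sfun
      have hconst : 0 ≤ (n : ℝ) + ∑ k ∈ Finset.range (n+1), Afun C Tf k 0 := by
        have : 0 ≤ ∑ k ∈ Finset.range (n+1), Afun C Tf k 0 :=
          Finset.sum_nonneg fun k _ => Afun_nonneg hTnn k _
        have hn : (0:ℝ) ≤ n := Nat.cast_nonneg n
        linarith
      linarith
  calc Tf (C + (1/2)^n) r ≤ Tf (C + (1/2)^n) ((m:ℝ)+1) := hTmono _ hCe _ _ hr hrm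
    _ = Afun C Tf n m := rfl
    _ ≤ _ := hkey

lemma Sfun_continuous (n : ℕ) : Continuous (Sfun C Tf n) := by
  rw [continuous_iff_continuousAt]
  intro r0
  set M : ℕ := ⌈max r0 0⌉₊ + 1 with hM
  have hr0M : r0 < (M : ℝ) := by
    calc r0 ≤ max r0 0 := le_max_left _ _
      _ ≤ (⌈max r0 0⌉₊ : ℝ) := Nat.le_ceil _
      _ < M := by push_cast [hM]; linarith
  have hopen : IsOpen (Iio (M : ℝ)) := isOpen_Iio
  have heq : ∀ r ∈ Iio (M:ℝ), Sfun C Tf n r =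
      ((n : ℝ) + ∑ k ∈ Finset.range (n+1), Afun C Tf k 0) +
      ∑ j ∈ Finset.range M, (∑ k ∈ Finset.range (n+1), Afun C Tf k (j+1)) * clamp01 (r - j) := by
    intro r hr
    unfold Sfun
    congr 1
    apply tsum_eq_sum
    intro j hj
    apply Ssummand_eq_zero
    have : (M : ℝ) ≤ j := Nat.cast_le.2 (not_lt.1 fun h => hj (Finset.mem_range.2 h))
    have := hr.out
    linarith
  have hcont : ContinuousAt (fun r =>
      ((n : ℝ) + ∑ k ∈ Finset.range (n+1), Afun C Tf k 0) +
      ∑ j ∈ Finset.range M, (∑ k ∈ Finset.range (n+1), Afun C Tf k (j+1)) * clamp01 (r - j)) r0 := by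
    apply Continuous.continuousAt
    apply continuous_const.add
    apply continuous_finset_sum
    intro j _
    exact continuous_const.mul (clamp01_continuous.comp (continuous_id.sub continuous_const))
  apply ContinuousAt.congr hcont
  exact Filter.eventuallyEq_of_mem (hopen.mem_nhds hr0M) (fun r hr => (heq r hr).symm)

end S

section B

variable (δinv : ℝ → ℝ) (C : ℝ) (Tf : ℝ → ℝ → ℝ)

noncomputable def efun (n : ℕ) (r : ℝ) : ℝ := min (Dfun δinv r) ((1/2)^(n+1))

noncomputable def wfun (n : ℕ) (r t : ℝ) : ℝ := clamp01 (1 + Sfun C Tf (n+1) r - t)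

noncomputable def βfun (r t : ℝ) : ℝ :=
  (Dfun δinv r - efun δinv 0 r) * wfun C Tf 0 r t
  + (∑' n : ℕ, (efun δinv n r - efun δinv (n+1) r) * wfun C Tf (n+1) r t)
  + Dfun δinv r / (1 + max t 0)

end B

section BL

variable {δ δinv : ℝ → ℝ} {C : ℝ} {Tf : ℝ → ℝ → ℝ}
variable (hδ : ClassKInf δ)
  (hδinv : ∀ s, 0 ≤ s → 0 ≤ δinv s ∧ δ (δinv s) = s)
  (hδinv' : ∀ s, 0 ≤ s → δinv (δ s) = s)
  (hTnn : ∀ ε r : ℝ, C < ε → 0 < r → 0 ≤ Tf ε r)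
  (hTmono : ∀ ε : ℝ, C < ε → ∀ r1 r2 : ℝ, 0 < r1 → r1 < r2 → Tf ε r1 ≤ Tf ε r2)

-- w lemmas
lemma wfun_nonneg (n : ℕ) (r t : ℝ) : 0 ≤ wfun C Tf n r t := clamp01_nonneg _
lemma wfun_le_one (n : ℕ) (r t : ℝ) : wfun C Tf n r t ≤ 1 := clamp01_le_one _

include hTnn in
lemma wfun_mono_r (n : ℕ) (t : ℝ) : Monotone (fun r => wfun C Tf n r t) := by
  intro a b hab
  apply clamp01_mono
  have := Sfun_mono_r hTnn (n+1) hab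
  linarith

lemma wfun_anti_t (n : ℕ) (r : ℝ) : Antitone (fun t => wfun C Tf n r t) := by
  intro t1 t2 h
  apply clamp01_mono
  linarith

lemma wfun_cont_r (n : ℕ) (t : ℝ) : Continuous (fun r => wfun C Tf n r t) := by
  apply clamp01_continuous.comp
  exact (continuous_const.add (Sfun_continuous (n+1))).sub continuous_const

lemma wfun_cont_t (n : ℕ) (r : ℝ) : Continuous (fun t => wfun C Tf n r t) := by
  apply clamp01_continuous.comp
  exact continuous_const.sub continuous_id

lemma wfun_eq_one {n : ℕ} {r t : ℝ} (h : t ≤ Sfun C Tf (n+1) r) : wfun C Tf n r t = 1 :=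
  clamp01_eq_one (by linarith)

lemma wfun_eq_zero {n : ℕ} {r t : ℝ} (h : 1 + Sfun C Tf (n+1) r ≤ t) : wfun C Tf n r t = 0 :=
  clamp01_eq_zero (by linarith)

-- e lemmas
include hδinv in
omit hδ in
lemma efun_nonneg (n : ℕ) (r : ℝ) : 0 ≤ efun δinv n r :=
  le_min (Dfun_nonneg hδinv r) (by positivity)

lemma efun_le (n : ℕ) (r : ℝ) : efun δinv n r ≤ (1/2)^(n+1) := min_le_right _ _

lemma efun_anti_step (n : ℕ) (r : ℝ) : efun δinv (n+1) r ≤ efun δinv n r :=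
  min_le_min le_rfl (half_pow_succ_le (n+1))

include hδ hδinv in
lemma efun_mono_r (n : ℕ) : Monotone (efun δinv n) :=
  fun a b h => min_le_min (Dfun_mono hδ hδinv h) le_rfl

include hδ hδinv hδinv' in
lemma efun_cont (n : ℕ) : Continuous (efun δinv n) :=
  (Dfun_continuous hδ hδinv hδinv').min continuous_const

include hδinv in
omit hδ in
lemma efun_tendsto (r : ℝ) : Tendsto (fun n => efun δinv n r) atTop (nhds 0) :=
  squeeze_zero (fun n => efun_nonneg hδinv n r) (fun n => efun_le n r) half_pow_tendsto

include hδinv in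
omit hδ in
lemma hasSum_tail_e (K : ℕ) (r : ℝ) :
    HasSum (fun n => if K ≤ n then efun δinv n r - efun δinv (n+1) r else 0) (efun δinv K r) :=
  hasSum_tail _ (fun n => efun_anti_step n r) (efun_tendsto hδinv r) K

include hδinv in
omit hδ in
lemma dfun_nonneg (n : ℕ) (r : ℝ) : 0 ≤ efun δinv n r - efun δinv (n+1) r := by
  have := efun_anti_step (δinv := δinv) n r
  linarith

lemma dfun_le (n : ℕ) (r : ℝ) :
    efun δinv n r - efun δinv (n+1) r ≤ (1/2)^(n+1) - (1/2)^(n+2) :=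
  min_sub_min_le (half_pow_succ_le (n+1))

lemma dfun_le' (n : ℕ) (r : ℝ) : efun δinv n r - efun δinv (n+1) r ≤ (1/2)^(n+1) := by
  have h1 := dfun_le (δinv := δinv) n r
  have h2 : (0:ℝ) < (1/2)^(n+2) := by positivity
  linarith

include hδ hδinv in
lemma dfun_mono_r (n : ℕ) {a b : ℝ} (h : a ≤ b) :
    efun δinv n a - efun δinv (n+1) a ≤ efun δinv n b - efun δinv (n+1) b :=
  min_sub_min_mono (half_pow_succ_le (n+1)) (Dfun_mono hδ hδinv h)

include hδinv in
omit hδ in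
lemma summable_F (r t : ℝ) :
    Summable (fun n : ℕ => (efun δinv n r - efun δinv (n+1) r) * wfun C Tf (n+1) r t) := by
  apply Summable.of_nonneg_of_le
    (fun n => mul_nonneg (dfun_nonneg hδinv n r) (wfun_nonneg (n+1) r t))
    (fun n => ?_) half_pow_summable
  calc (efun δinv n r - efun δinv (n+1) r) * wfun C Tf (n+1) r t
      ≤ (efun δinv n r - efun δinv (n+1) r) * 1 :=
        mul_le_mul_of_nonneg_left (wfun_le_one _ _ _) (dfun_nonneg hδinv n r)
    _ = efun δinv n r - efun δinv (n+1) r := mul_one _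
    _ ≤ (1/2)^(n+1) := dfun_le' n r

include hδinv in
omit hδ in
lemma tsum_F_nonneg (r t : ℝ) :
    0 ≤ ∑' n : ℕ, (efun δinv n r - efun δinv (n+1) r) * wfun C Tf (n+1) r t :=
  tsum_nonneg fun n => mul_nonneg (dfun_nonneg hδinv n r) (wfun_nonneg (n+1) r t)

include hδinv in
omit hδ in
lemma tsum_F_ge (K : ℕ) (r t : ℝ)
    (hw : ∀ n, K ≤ n → wfun C Tf (n+1) r t = 1) :
    efun δinv K r ≤ ∑' n : ℕ, (efun δinv n r - efun δinv (n+1) r) * wfun C Tf (n+1) r t := by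
  have hb := hasSum_tail_e hδinv (δinv := δinv) K r
  rw [← hb.tsum_eq]
  apply Summable.tsum_le_tsum _ hb.summable (summable_F hδinv r t)
  intro n
  by_cases h : K ≤ n
  · rw [if_pos h, hw n h, mul_one]
  · rw [if_neg h]
    exact mul_nonneg (dfun_nonneg hδinv n r) (wfun_nonneg (n+1) r t)

include hδinv in
omit hδ in
lemma tsum_F_le (N : ℕ) (r t : ℝ)
    (hw : ∀ n, n < N → wfun C Tf (n+1) r t = 0) :
    ∑' n : ℕ, (efun δinv n r - efun δinv (n+1) r) * wfun C Tf (n+1) r t ≤ (1/2)^(N+1) := by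
  have hg : HasSum (fun n => if N ≤ n then ((1:ℝ)/2)^(n+1) - (1/2)^(n+2) else 0) ((1/2)^(N+1)) :=
    hasSum_tail (fun n => (1/2)^(n+1)) (fun n => half_pow_succ_le (n+1)) half_pow_tendsto N
  rw [← hg.tsum_eq]
  apply Summable.tsum_le_tsum _ (summable_F hδinv r t) hg.summable
  intro n
  by_cases h : N ≤ n
  · rw [if_pos h]
    calc (efun δinv n r - efun δinv (n+1) r) * wfun C Tf (n+1) r t
        ≤ (efun δinv n r - efun δinv (n+1) r) * 1 :=
          mul_le_mul_of_nonneg_left (wfun_le_one _ _ _) (dfun_nonneg hδinv n r)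
      _ = efun δinv n r - efun δinv (n+1) r := mul_one _
      _ ≤ (1/2)^(n+1) - (1/2)^(n+2) := dfun_le n r
  · rw [if_neg h, hw n (not_le.1 h), mul_zero]

-- β lemmas
include hδinv in
omit hδ in
lemma βfun_nonneg (r t : ℝ) : 0 ≤ βfun δinv C Tf r t := by
  unfold βfun
  have h1 : 0 ≤ (Dfun δinv r - efun δinv 0 r) * wfun C Tf 0 r t := by
    apply mul_nonneg _ (wfun_nonneg _ _ _)
    have : efun δinv 0 r ≤ Dfun δinv r := min_le_left _ _
    linarith
  have h2 := tsum_F_nonneg hδinv (C := C) (Tf := Tf) r t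
  have h3 : 0 ≤ Dfun δinv r / (1 + max t 0) := by
    apply div_nonneg (Dfun_nonneg hδinv r)
    have := le_max_right t 0
    linarith
  linarith

include hδ hδinv in
lemma βfun_zero (t : ℝ) : βfun δinv C Tf 0 t = 0 := by
  have hD0 : Dfun δinv 0 = 0 := Dfun_zero hδ hδinv
  have he0 : ∀ n, efun δinv n 0 = 0 := by
    intro n
    unfold efun
    rw [hD0]
    exact min_eq_left (by positivity)
  unfold βfun
  rw [hD0]
  simp only [he0, sub_zero, zero_mul, sub_self, zero_mul, zero_div, add_zero, zero_add]
  exact tsum_zero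

include hδ hδinv hTnn in
lemma βfun_strictMonoOn (t : ℝ) : StrictMonoOn (fun r => βfun δinv C Tf r t) (Ici 0) := by
  intro a ha b hb hab
  unfold βfun
  dsimp only
  have h1 : (Dfun δinv a - efun δinv 0 a) * wfun C Tf 0 a t ≤
      (Dfun δinv b - efun δinv 0 b) * wfun C Tf 0 b t := by
    apply mul_le_mul
    · exact sub_min_mono (Dfun_mono hδ hδinv hab.le)
    · exact wfun_mono_r hTnn 0 t hab.le
    · exact wfun_nonneg _ _ _
    · have : efun δinv 0 b ≤ Dfun δinv b := min_le_left _ _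
      linarith
  have h2 : ∑' n : ℕ, (efun δinv n a - efun δinv (n+1) a) * wfun C Tf (n+1) a t ≤
      ∑' n : ℕ, (efun δinv n b - efun δinv (n+1) b) * wfun C Tf (n+1) b t := by
    apply Summable.tsum_le_tsum _ (summable_F hδinv a t) (summable_F hδinv b t)
    intro n
    apply mul_le_mul (dfun_mono_r hδ hδinv n hab.le) (wfun_mono_r hTnn (n+1) t hab.le)
      (wfun_nonneg _ _ _) (dfun_nonneg hδinv n b)
  have hc : (0:ℝ) < 1 + max t 0 := by
    have := le_max_right t 0
    linarith
  have h3 : Dfun δinv a / (1 + max t 0) < Dfun δinv b / (1 + max t 0) := by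
    apply (div_lt_div_iff_of_pos_right hc).2
    exact Dfun_strictMonoOn hδ hδinv ha hb hab
  linarith

include hδ hδinv hδinv' in
lemma βfun_cont_r (t : ℝ) : Continuous (fun r => βfun δinv C Tf r t) := by
  unfold βfun
  apply Continuous.add
  apply Continuous.add
  · exact ((Dfun_continuous hδ hδinv hδinv').sub (efun_cont hδ hδinv hδinv' 0)).mul
      (wfun_cont_r 0 t)
  · apply continuous_tsum (u := fun n : ℕ => ((1:ℝ)/2)^(n+1))
      (f := fun n r => (efun δinv n r - efun δinv (n+1) r) * wfun C Tf (n+1) r t)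
    · intro n
      exact ((efun_cont hδ hδinv hδinv' n).sub (efun_cont hδ hδinv hδinv' (n+1))).mul
        (wfun_cont_r (n+1) t)
    · exact half_pow_summable
    · intro n r
      rw [Real.norm_eq_abs, abs_of_nonneg
        (mul_nonneg (dfun_nonneg hδinv n r) (wfun_nonneg (n+1) r t))]
      calc (efun δinv n r - efun δinv (n+1) r) * wfun C Tf (n+1) r t
          ≤ (efun δinv n r - efun δinv (n+1) r) * 1 :=
            mul_le_mul_of_nonneg_left (wfun_le_one _ _ _) (dfun_nonneg hδinv n r)
        _ = efun δinv n r - efun δinv (n+1) r := mul_one _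
        _ ≤ (1/2)^(n+1) := dfun_le' n r
  · have hc : (0:ℝ) < 1 + max t 0 := by
      have := le_max_right t 0
      linarith
    exact (Dfun_continuous hδ hδinv hδinv').div_const _

include hδinv in
omit hδ in
lemma βfun_cont_t (r : ℝ) : Continuous (βfun δinv C Tf r) := by
  unfold βfun
  apply Continuous.add
  apply Continuous.add
  · exact continuous_const.mul (wfun_cont_t 0 r)
  · apply continuous_tsum (u := fun n : ℕ => ((1:ℝ)/2)^(n+1))
      (f := fun n t => (efun δinv n r - efun δinv (n+1) r) * wfun C Tf (n+1) r t)
    · intro n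
      exact continuous_const.mul (wfun_cont_t (n+1) r)
    · exact half_pow_summable
    · intro n t
      rw [Real.norm_eq_abs, abs_of_nonneg
        (mul_nonneg (dfun_nonneg hδinv n r) (wfun_nonneg (n+1) r t))]
      calc (efun δinv n r - efun δinv (n+1) r) * wfun C Tf (n+1) r t
          ≤ (efun δinv n r - efun δinv (n+1) r) * 1 :=
            mul_le_mul_of_nonneg_left (wfun_le_one _ _ _) (dfun_nonneg hδinv n r)
        _ = efun δinv n r - efun δinv (n+1) r := mul_one _
        _ ≤ (1/2)^(n+1) := dfun_le' n r
  · apply continuous_const.div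
    · exact continuous_const.add (continuous_id.max continuous_const)
    · intro t
      have := le_max_right t 0
      intro h
      linarith [h]

include hδinv in
omit hδ in
lemma βfun_anti_t (r : ℝ) : Antitone (βfun δinv C Tf r) := by
  intro t1 t2 h
  unfold βfun
  have h1 : (Dfun δinv r - efun δinv 0 r) * wfun C Tf 0 r t2 ≤
      (Dfun δinv r - efun δinv 0 r) * wfun C Tf 0 r t1 := by
    apply mul_le_mul_of_nonneg_left (wfun_anti_t 0 r h)
    have : efun δinv 0 r ≤ Dfun δinv r := min_le_left _ _
    linarith
  have h2 : ∑' n : ℕ, (efun δinv n r - efun δinv (n+1) r) * wfun C Tf (n+1) r t2 ≤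
      ∑' n : ℕ, (efun δinv n r - efun δinv (n+1) r) * wfun C Tf (n+1) r t1 := by
    apply Summable.tsum_le_tsum _ (summable_F hδinv r t2) (summable_F hδinv r t1)
    intro n
    exact mul_le_mul_of_nonneg_left (wfun_anti_t (n+1) r h) (dfun_nonneg hδinv n r)
  have h3 : Dfun δinv r / (1 + max t2 0) ≤ Dfun δinv r / (1 + max t1 0) := by
    apply div_le_div_of_nonneg_left (Dfun_nonneg hδinv r)
    · have := le_max_right t1 0
      linarith
    · have : max t1 0 ≤ max t2 0 := max_le_max h le_rfl
      linarith
  linarith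

include hδinv hTnn in
omit hδ in
lemma βfun_tendsto (r : ℝ) : Tendsto (βfun δinv C Tf r) atTop (nhds 0) := by
  have h0 : Tendsto (fun t => (Dfun δinv r - efun δinv 0 r) * wfun C Tf 0 r t)
      atTop (nhds 0) := by
    apply Tendsto.congr' _ tendsto_const_nhds
    filter_upwards [eventually_ge_atTop (1 + Sfun C Tf 1 r)] with t ht
    rw [wfun_eq_zero ht, mul_zero]
  have h2 : Tendsto (fun t => ∑' n : ℕ,
      (efun δinv n r - efun δinv (n+1) r) * wfun C Tf (n+1) r t) atTop (nhds 0) := by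
    rw [NormedAddCommGroup.tendsto_nhds_zero]
    intro ε hε
    obtain ⟨N, hN⟩ := exists_pow_lt_of_lt_one hε (by norm_num : (1:ℝ)/2 < 1)
    filter_upwards [eventually_ge_atTop (1 + Sfun C Tf (N+1) r)] with t ht
    have hw : ∀ n, n < N → wfun C Tf (n+1) r t = 0 := by
      intro n hn
      apply wfun_eq_zero
      have : Sfun C Tf (n+2) r ≤ Sfun C Tf (N+1) r :=
        Sfun_mono_n hTnn r (by omega)
      linarith
    have hle := tsum_F_le hδinv N r t hw
    have hnn := tsum_F_nonneg hδinv (C := C) (Tf := Tf) r t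
    rw [Real.norm_eq_abs, abs_of_nonneg hnn]
    calc ∑' n : ℕ, (efun δinv n r - efun δinv (n+1) r) * wfun C Tf (n+1) r t
        ≤ (1/2)^(N+1) := hle
      _ ≤ (1/2)^N := half_pow_succ_le N
      _ < ε := hN
  have h3 : Tendsto (fun t => Dfun δinv r / (1 + max t 0)) atTop (nhds 0) := by
    apply Tendsto.div_atTop (tendsto_const_nhds)
    apply tendsto_atTop_add_const_left
    exact tendsto_atTop_mono (fun t => le_max_left t 0) tendsto_id
  have := (h0.add h2).add h3
  simp only [add_zero] at this; exact this

include hδinv hTnn in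
omit hδ in
lemma βfun_ge_D {r t : ℝ} (h : t ≤ Sfun C Tf 1 r) : Dfun δinv r ≤ βfun δinv C Tf r t := by
  unfold βfun
  have hw0 : wfun C Tf 0 r t = 1 := wfun_eq_one h
  have hwn : ∀ n, 0 ≤ n → wfun C Tf (n+1) r t = 1 := by
    intro n _
    apply wfun_eq_one
    calc t ≤ Sfun C Tf 1 r := h
      _ ≤ Sfun C Tf (n+2) r := Sfun_mono_n hTnn r (by omega)
  have htsum := tsum_F_ge hδinv 0 r t hwn
  have h3 : 0 ≤ Dfun δinv r / (1 + max t 0) := by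
    apply div_nonneg (Dfun_nonneg hδinv r)
    have := le_max_right t 0
    linarith
  rw [hw0, mul_one]
  have : efun δinv 0 r ≤ Dfun δinv r := min_le_left _ _
  linarith

include hδinv hTnn in
omit hδ in
lemma βfun_ge_eK (K : ℕ) {r t : ℝ} (h : t ≤ Sfun C Tf (K+2) r) :
    efun δinv K r ≤ βfun δinv C Tf r t := by
  unfold βfun
  have hwn : ∀ n, K ≤ n → wfun C Tf (n+1) r t = 1 := by
    intro n hn
    apply wfun_eq_one
    calc t ≤ Sfun C Tf (K+2) r := h
      _ ≤ Sfun C Tf (n+2) r := Sfun_mono_n hTnn r (by omega)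
  have htsum := tsum_F_ge hδinv K r t hwn
  have h1 : 0 ≤ (Dfun δinv r - efun δinv 0 r) * wfun C Tf 0 r t := by
    apply mul_nonneg _ (wfun_nonneg _ _ _)
    have : efun δinv 0 r ≤ Dfun δinv r := min_le_left _ _
    linarith
  have h3 : 0 ≤ Dfun δinv r / (1 + max t 0) := by
    apply div_nonneg (Dfun_nonneg hδinv r)
    have := le_max_right t 0
    linarith
  linarith

end BL
end LemA2Aux

open LemA2Aux in
/-- Lemma A.2.  Here `δinv` is the inverse on `[0,∞)` of the class-𝒦∞ function `δ`,
and `Tf : (C,∞) × (0,∞) → [0,∞)` is nondecreasing in its second argument and tends to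
`+∞` as its first argument decreases to `C`.  The conclusion states that for each
`r > 0` and `t ≥ 0` there is an `ε` in the set
`A_{r,t} = {ε ∈ (C,∞) : Tf(ε,r) ≤ t} ∪ {∞}` such that `min {ε − 2C, δ⁻¹(r)} ≤ β(r,t)`;
the case `ε = ∞` is rendered by the second disjunct `δ⁻¹(r) ≤ β(r,t)`. -/
theorem exists_KL_of_attractivity_times
    (δ : ℝ → ℝ) (hδ : ClassKInf δ)
    (δinv : ℝ → ℝ) (hδinv : ∀ s, 0 ≤ s → 0 ≤ δinv s ∧ δ (δinv s) = s)
    (hδinv' : ∀ s, 0 ≤ s → δinv (δ s) = s)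
    (C : ℝ) (hC : 0 ≤ C)
    (Tf : ℝ → ℝ → ℝ)
    (hTnn : ∀ ε r : ℝ, C < ε → 0 < r → 0 ≤ Tf ε r)
    (hTmono : ∀ ε : ℝ, C < ε → ∀ r1 r2 : ℝ, 0 < r1 → r1 < r2 → Tf ε r1 ≤ Tf ε r2)
    (hTlim : ∀ r : ℝ, 0 < r →
      Filter.Tendsto (fun ε => Tf ε r) (nhdsWithin C (Set.Ioi C)) Filter.atTop) :
    ∃ β : ℝ → ℝ → ℝ, ClassKL β ∧
      ∀ r : ℝ, 0 < r → ∀ t : ℝ, 0 ≤ t →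
        (∃ ε : ℝ, C < ε ∧ Tf ε r ≤ t ∧ min (ε - 2 * C) (δinv r) ≤ β r t) ∨
        δinv r ≤ β r t := by

  classical
  refine ⟨βfun δinv C Tf, ⟨?_, ?_⟩, ?_⟩
  · intro t _
    exact ⟨(βfun_cont_r hδ hδinv hδinv' t).continuousOn,
      βfun_strictMonoOn hδ hδinv hTnn t,
      βfun_zero hδ hδinv t,
      fun s _ => βfun_nonneg hδinv s t⟩
  · intro s _
    exact ⟨(βfun_cont_t hδinv s).continuousOn,
      (βfun_anti_t hδinv s).antitoneOn _,
      βfun_tendsto hδinv hTnn s⟩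
  · intro r hr t _
    have hDr : Dfun δinv r = δinv r := by unfold Dfun; rw [max_eq_left hr.le]
    rcases le_or_gt t (Sfun C Tf 1 r) with hcase | hcase
    · right
      rw [← hDr]
      exact βfun_ge_D hδinv hTnn hcase
    · left
      set P : ℕ → Prop := fun n => Sfun C Tf n r ≤ t with hP
      set M : ℕ := max 1 ⌈t⌉₊ with hM
      have hP1 : P 1 := hcase.le
      have h1M : 1 ≤ M := le_max_left _ _
      set N := Nat.findGreatest P M with hN
      have hN1 : 1 ≤ N := Nat.le_findGreatest h1M hP1
      have hPN : P N := Nat.findGreatest_spec h1M hP1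
      have hNle : N ≤ M := Nat.findGreatest_le M
      have hnext : t ≤ Sfun C Tf (N+1) r := by
        by_cases hcase2 : N + 1 ≤ M
        · have hng : ¬ P (N+1) := by
            rw [hN]
            exact Nat.findGreatest_is_greatest (by omega) hcase2
          exact (not_le.1 hng).le
        · have hNM : N = M := le_antisymm hNle (by omega)
          have h1 : t ≤ (M : ℝ) := by
            calc t ≤ (⌈t⌉₊ : ℝ) := Nat.le_ceil t
              _ ≤ (M : ℝ) := by exact_mod_cast Nat.cast_le.2 (le_max_right _ _)
          rw [hNM]
          have h2 : ((M+1 : ℕ):ℝ) ≤ Sfun C Tf (M+1) r := Sfun_ge_n hTnn (M+1) r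
          push_cast at h2
          linarith
      obtain ⟨K, hK⟩ : ∃ K, N = K + 1 := ⟨N - 1, (Nat.succ_pred_eq_of_pos hN1).symm⟩
      refine ⟨C + (1/2)^N, ?_, ?_, ?_⟩
      · have : (0:ℝ) < (1/2)^N := by positivity
        linarith
      · calc Tf (C + (1/2)^N) r ≤ Sfun C Tf N r := Sfun_ge_Tf hTnn hTmono N hr
          _ ≤ t := hPN
      · have hβ : efun δinv K r ≤ βfun δinv C Tf r t := by
          apply βfun_ge_eK hδinv hTnn K
          rw [show K + 2 = N + 1 by omega]
          exact hnext
        have hmin : min (C + (1/2)^N - 2*C) (δinv r) ≤ efun δinv K r := by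
          unfold efun
          apply le_min
          · rw [hDr]
            exact min_le_right _ _
          · apply (min_le_left _ _).trans
            have hpow : ((1:ℝ)/2)^(K+1) = (1/2)^N := by rw [hK]
            rw [hpow]
            linarith
        linarith
end

section
/- Let 𝒯 be an additive subgroup of ℝ, 𝒰 a set of inputs, and μᵃ an input measure. Let β be of class 𝒦𝓛, r₀ ≥ 0, γ of class 𝒦 with γ(r) < r for all r > r₀, and C ≥ 0. Set ϑ(s) := β(s,0) and Ĉ := max{C, r₀}. Let (τ,u,x,y) be a trajectory satisfying (H1): for each t₀ ∈ [0,τ) and each t ∈ [t₀,τ), y(t) ≤ max{β(x(t₀), t−t₀), γ(‖y‖_{[t₀,t]}), μᵃ(u,t₀,t), C}. Then for any r ≥ 0 and any t₀ ∈ [0,τ) with x(t₀) ≤ r, one has y(t) ≤ max{ϑ(r), μᵃ(u,t₀,t), Ĉ} for all t ∈ [t₀,τ). -/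
open Set Filter

/-- First claim in the proof of Theorem 1: along any trajectory satisfying (H1), if
`x(t₀) ≤ r` then `y(t) ≤ max {ϑ(r), μᵃ(u,t₀,t), Ĉ}` for all `t ∈ [t₀,τ)`, where
`ϑ(s) = β(s,0)` and `Ĉ = max {C, r₀}`. -/
theorem output_bound_of_H1 {U : Type*} (𝒯 : AddSubgroup ℝ)
    (μa : U → ℝ → ℝ → ℝ) (hμa : InputMeasure μa)
    (β : ℝ → ℝ → ℝ) (hβ : ClassKL β)
    (r0 : ℝ) (hr0 : 0 ≤ r0)
    (γ : ℝ → ℝ) (hγ : ClassK γ) (hγr : ∀ r, r0 < r → γ r < r)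
    (C : ℝ) (hC : 0 ≤ C)
    (τ : EReal) (u : U) (x y : ℝ → ℝ) (htraj : IsTraj 𝒯 τ x y)
    (hH1 : H1 𝒯 μa β γ C τ u x y) :
    ∀ r : ℝ, 0 ≤ r → ∀ t0 : ℝ, t0 ∈ 𝒯 → 0 ≤ t0 → (t0 : EReal) < τ → x t0 ≤ r →
      ∀ t : ℝ, t ∈ 𝒯 → t0 ≤ t → (t : EReal) < τ →
        y t ≤ max (β r 0) (max (μa u t0 t) (max C r0)) := by
  intro r hr t0 ht0T ht0 ht0τ hxr t htT htt0 htτ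
  have hx0 : 0 ≤ x t0 := (htraj.2.1 t0 ht0T ht0 ht0τ).1
  have hbdd : BddAbove (y '' {s : ℝ | s ∈ 𝒯 ∧ s ∈ Icc t0 t}) :=
    htraj.2.2 t0 t ht0 htt0 htτ
  have ht0A : t0 ∈ {s : ℝ | s ∈ 𝒯 ∧ s ∈ Icc t0 t} := ⟨ht0T, le_refl _, htt0⟩
  set S := supT 𝒯 y t0 t with hSdef
  have hyS : ∀ s, s ∈ 𝒯 → s ∈ Icc t0 t → y s ≤ S := fun s h1 h2 =>
    le_csSup hbdd (mem_image_of_mem y ⟨h1, h2⟩)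
  have hS0 : 0 ≤ S :=
    le_trans (htraj.2.1 t0 ht0T ht0 ht0τ).2 (hyS t0 ht0T ⟨le_refl _, htt0⟩)
  have hkey : ∀ s, s ∈ 𝒯 → s ∈ Icc t0 t →
      y s ≤ max (max (β r 0) (γ S)) (max (μa u t0 t) C) := by
    intro s hsT hsI
    have hsτ : (s : EReal) < τ := lt_of_le_of_lt (EReal.coe_le_coe_iff.mpr hsI.2) htτ
    have h1 := hH1 t0 s ht0T hsT ht0 hsI.1 hsτ
    have hβ1 : β (x t0) (s - t0) ≤ β r 0 := by
      have ha : β (x t0) (s - t0) ≤ β (x t0) 0 :=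
        (hβ.2 (x t0) hx0).2.1 (Set.mem_Ici.mpr (le_refl 0)) (by simp [sub_nonneg.mpr hsI.1]) (sub_nonneg.mpr hsI.1)
      have hb : β (x t0) 0 ≤ β r 0 :=
        (hβ.1 0 (le_refl 0)).2.1.monotoneOn hx0 (le_trans hx0 hxr) hxr
      linarith
    have hγ1 : γ (supT 𝒯 y t0 s) ≤ γ S := by
      have hsub : supT 𝒯 y t0 s ≤ S := by
        apply csSup_le_csSup hbdd
        · exact ⟨y t0, mem_image_of_mem y ⟨ht0T, le_refl _, hsI.1⟩⟩
        · exact image_mono (fun z hz => ⟨hz.1, hz.2.1, le_trans hz.2.2 hsI.2⟩)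
      have hnn : 0 ≤ supT 𝒯 y t0 s :=
        le_trans (htraj.2.1 t0 ht0T ht0 ht0τ).2
          (le_csSup (htraj.2.2 t0 s ht0 hsI.1 hsτ)
            (mem_image_of_mem y ⟨ht0T, le_refl _, hsI.1⟩))
      exact hγ.2.1.monotoneOn hnn (le_trans hnn hsub) hsub
    have hμ1 : μa u t0 s ≤ μa u t0 t :=
      hμa.2 u t0 t0 s t ht0 (le_refl _) hsI.1 hsI.2
    have := le_trans h1 (max_le_max (max_le_max hβ1 hγ1) (max_le_max hμ1 (le_refl C)))
    exact this
  have hSle : S ≤ max (max (β r 0) (γ S)) (max (μa u t0 t) C) := by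
    apply csSup_le ⟨y t0, mem_image_of_mem y ht0A⟩
    rintro z ⟨s, hs, rfl⟩
    exact hkey s hs.1 hs.2
  have hyt : y t ≤ S := hyS t htT ⟨htt0, le_refl _⟩
  rcases le_or_gt S r0 with hcase | hcase
  · have : y t ≤ r0 := le_trans hyt hcase
    simp only [le_max_iff]
    tauto
  · have hγS : γ S < S := hγr S hcase
    have h2 : S ≤ max (β r 0) (max (μa u t0 t) C) := by
      rcases le_max_iff.mp hSle with h | h
      · rcases le_max_iff.mp h with h' | h'
        · exact le_max_of_le_left h'
        · linarith
      · exact le_max_of_le_right h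
    have := le_trans hyt h2
    simp only [le_max_iff] at this ⊢
    tauto
end

section
/- Let 𝒯 be an additive subgroup of ℝ, 𝒰 a set of inputs, and μᵃ, μᵇ input measures. Let β be of class 𝒦𝓛, r₀ ≥ 0, γ of class 𝒦 with γ(r) < r for all r > r₀, σ₁, σ₂, σ₃ of class 𝒦, and d, C ≥ 0. Set ϑ(s) := β(s,0), Ĉ := max{C, r₀}, σ̂₁(s) := max{σ₁(s), σ₃(ϑ(s))}, and d̂ := max{σ₃(Ĉ), d}. Let (τ,u,x,y) be a trajectory satisfying (H1): for each t₀ ∈ [0,τ) and each t ∈ [t₀,τ), y(t) ≤ max{β(x(t₀), t−t₀), γ(‖y‖_{[t₀,t]}), μᵃ(u,t₀,t), C}; and (H2): for each t₀ ∈ [0,τ) and each t ∈ [t₀,τ), x(t) ≤ max{σ₁(x(t₀)), σ₂(t−t₀), σ₃(‖y‖_{[t₀,t]}), μᵇ(u,t₀,t), d}. Then for any r ≥ 0 and any t₀ ∈ [0,τ) with x(t₀) ≤ r, one has x(t) ≤ max{σ̂₁(r), σ₂(t−t₀), σ₃(μᵃ(u,t₀,t)), μᵇ(u,t₀,t), d̂}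 for all t ∈ [t₀,τ). -/
open Set Filter

lemma monoOn_map_max {f : ℝ → ℝ} (hf : MonotoneOn f (Set.Ici 0)) {a b : ℝ}
    (ha : 0 ≤ a) (hb : 0 ≤ b) : f (max a b) = max (f a) (f b) := by
  rcases le_total a b with h | h
  · rw [max_eq_right h, max_eq_right (hf ha hb h)]
  · rw [max_eq_left h, max_eq_left (hf hb ha h)]

/-- Second claim in the proof of Theorem 1: along any trajectory satisfying (H1) and
(H2), if `x(t₀) ≤ r` then
`x(t) ≤ max {σ̂₁(r), σ₂(t−t₀), σ₃(μᵃ(u,t₀,t)), μᵇ(u,t₀,t), d̂}` for all `t ∈ [t₀,τ)`,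
where `ϑ(s) = β(s,0)`, `Ĉ = max {C,r₀}`, `σ̂₁(s) = max {σ₁(s), σ₃(ϑ(s))}` and
`d̂ = max {σ₃(Ĉ), d}`. -/
theorem state_bound_of_H1_H2 {U : Type*} (𝒯 : AddSubgroup ℝ)
    (μa μb : U → ℝ → ℝ → ℝ) (hμa : InputMeasure μa) (hμb : InputMeasure μb)
    (β : ℝ → ℝ → ℝ) (hβ : ClassKL β)
    (r0 : ℝ) (hr0 : 0 ≤ r0)
    (γ : ℝ → ℝ) (hγ : ClassK γ) (hγr : ∀ r, r0 < r → γ r < r)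
    (σ1 σ2 σ3 : ℝ → ℝ) (hσ1 : ClassK σ1) (hσ2 : ClassK σ2) (hσ3 : ClassK σ3)
    (d : ℝ) (hd : 0 ≤ d) (C : ℝ) (hC : 0 ≤ C)
    (τ : EReal) (u : U) (x y : ℝ → ℝ) (htraj : IsTraj 𝒯 τ x y)
    (hH1 : H1 𝒯 μa β γ C τ u x y)
    (hH2 : H2 𝒯 μb σ1 σ2 σ3 d τ u x y) :
    ∀ r : ℝ, 0 ≤ r → ∀ t0 : ℝ, t0 ∈ 𝒯 → 0 ≤ t0 → (t0 : EReal) < τ → x t0 ≤ r →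
      ∀ t : ℝ, t ∈ 𝒯 → t0 ≤ t → (t : EReal) < τ →
        x t ≤ max (max (max (σ1 r) (σ3 (β r 0))) (σ2 (t - t0)))
          (max (max (σ3 (μa u t0 t)) (μb u t0 t)) (max (σ3 (max C r0)) d)) := by

  intro r hr t0 ht0T ht0 ht0τ hx0r t htT ht0t htτ
  obtain ⟨-, hnn, hbdd⟩ := htraj
  have hx0 : 0 ≤ x t0 := (hnn t0 ht0T ht0 ht0τ).1
  have hy00 : 0 ≤ y t0 := (hnn t0 ht0T ht0 ht0τ).2
  set M := supT 𝒯 y t0 t with hMdef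
  have hBdd := hbdd t0 t ht0 ht0t htτ
  have hne : (y '' {s : ℝ | s ∈ 𝒯 ∧ s ∈ Icc t0 t}).Nonempty :=
    ⟨y t0, t0, ⟨ht0T, le_refl _, ht0t⟩, rfl⟩
  have hyM : ∀ s, s ∈ 𝒯 → s ∈ Icc t0 t → y s ≤ M := fun s h1 h2 =>
    le_csSup hBdd ⟨s, ⟨h1, h2⟩, rfl⟩
  have hM0 : 0 ≤ M := le_trans hy00 (hyM t0 ht0T ⟨le_refl _, ht0t⟩)
  -- class K facts
  have hϑ : ClassK (fun s => β s 0) := hβ.1 0 le_rfl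
  have hβr0 : 0 ≤ β r 0 := hϑ.2.2.2 r hr
  have hμa0 : 0 ≤ μa u t0 t := hμa.1 u t0 t ht0 (ht0.trans ht0t)
  have hμamono := hμa.2
  have hσ3mono : MonotoneOn σ3 (Set.Ici 0) := hσ3.2.1.monotoneOn
  have hγmono : MonotoneOn γ (Set.Ici 0) := hγ.2.1.monotoneOn
  -- Step 1: y s ≤ max (max (β (x t0) 0) (γ M)) (max (μa u t0 t) C) for s in [t0,t]∩𝒯
  have hstep : ∀ s, s ∈ 𝒯 → s ∈ Icc t0 t →
      y s ≤ max (max (β (x t0) 0) (γ M)) (max (μa u t0 t) C) := by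
    intro s hsT hsI
    have hsτ : (s : EReal) < τ := lt_of_le_of_lt (EReal.coe_le_coe_iff.2 hsI.2) htτ
    have h1 := hH1 t0 s ht0T hsT ht0 hsI.1 hsτ
    have hβle : β (x t0) (s - t0) ≤ β (x t0) 0 :=
      (hβ.2 (x t0) hx0).2.1 (mem_Ici.2 (le_refl 0)) (by simpa using sub_nonneg.2 hsI.1)
        (sub_nonneg.2 hsI.1)
    have hsuple : supT 𝒯 y t0 s ≤ M :=
      csSup_le_csSup hBdd ⟨y t0, t0, ⟨ht0T, le_refl _, hsI.1⟩, rfl⟩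
        (Set.image_mono (fun a ha => ⟨ha.1, ha.2.1, ha.2.2.trans hsI.2⟩))
    have hsup0 : 0 ≤ supT 𝒯 y t0 s := by
      refine le_trans hy00 (le_csSup (hbdd t0 s ht0 hsI.1 hsτ) ?_)
      exact ⟨t0, ⟨ht0T, le_refl _, hsI.1⟩, rfl⟩
    have hγle : γ (supT 𝒯 y t0 s) ≤ γ M := hγmono hsup0 hM0 hsuple
    have hμale : μa u t0 s ≤ μa u t0 t :=
      hμamono u t0 t0 s t ht0 (le_refl _) hsI.1 hsI.2
    calc y s ≤ _ := h1
      _ ≤ _ := by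
        apply max_le_max (max_le_max hβle hγle) (max_le_max hμale (le_refl C))
  -- Step 2: M ≤ that max
  have hMle : M ≤ max (max (β (x t0) 0) (γ M)) (max (μa u t0 t) C) := by
    refine csSup_le hne ?_
    rintro v ⟨s, ⟨hsT, hsI⟩, rfl⟩
    exact hstep s hsT hsI
  -- Step 3: small-gain: M ≤ max (max (β (x t0) 0) (μa u t0 t)) (max C r0)
  have hMK : M ≤ max (max (β (x t0) 0) (μa u t0 t)) (max C r0) := by
    by_cases hMr0 : M ≤ r0
    · exact hMr0.trans (le_max_of_le_right (le_max_right _ _))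
    · push_neg at hMr0
      have hγM : γ M < M := hγr M hMr0
      simp only [le_max_iff] at hMle ⊢
      rcases hMle with ((h | h) | (h | h))
      · exact Or.inl (Or.inl h)
      · linarith
      · exact Or.inl (Or.inr h)
      · exact Or.inr (Or.inl h)
  -- replace x t0 by r
  have hβxr : β (x t0) 0 ≤ β r 0 := by
    rcases eq_or_lt_of_le hx0r with h | h
    · rw [h]
    · exact le_of_lt (hϑ.2.1 hx0 hr h)
  have hMK' : M ≤ max (max (β r 0) (μa u t0 t)) (max C r0) :=
    hMK.trans (max_le_max (max_le_max hβxr (le_refl _)) (le_refl _))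
  -- Step 4: bound σ3 M
  have hK0 : (0:ℝ) ≤ max (max (β r 0) (μa u t0 t)) (max C r0) :=
    le_max_of_le_right (le_max_of_le_left hC)
  have hσ3M : σ3 M ≤ max (max (σ3 (β r 0)) (σ3 (μa u t0 t))) (σ3 (max C r0)) := by
    have h1 : σ3 M ≤ σ3 (max (max (β r 0) (μa u t0 t)) (max C r0)) :=
      hσ3mono hM0 hK0 hMK'
    rw [monoOn_map_max hσ3mono (le_max_of_le_left hβr0) (le_max_of_le_left hC),
      monoOn_map_max hσ3mono hβr0 hμa0] at h1
    exact h1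
  -- Step 5: conclude from H2
  have h2 := hH2 t0 t ht0T htT ht0 ht0t htτ
  have hσ1le : σ1 (x t0) ≤ σ1 r := (hσ1.2.1.monotoneOn) hx0 hr hx0r
  refine h2.trans (max_le (max_le ?_ ?_) (max_le ?_ (max_le ?_ ?_)))
  · exact le_max_of_le_left (le_max_of_le_left (le_max_of_le_left hσ1le))
  · exact le_max_of_le_left (le_max_right _ _)
  · refine hσ3M.trans (max_le (max_le ?_ ?_) ?_)
    · exact le_max_of_le_left (le_max_of_le_left (le_max_right _ _))
    · exact le_max_of_le_right (le_max_of_le_left (le_max_left _ _))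
    · exact le_max_of_le_right (le_max_of_le_right (le_max_left _ _))
  · exact le_max_of_le_right (le_max_of_le_left (le_max_right _ _))
  · exact le_max_of_le_right (le_max_of_le_right (le_max_right _ _))
end

section
/- Let y : [0,∞) → ℝ be Lebesgue measurable and essentially bounded on every compact interval. Then there exists a function y* : [0,∞) → ℝ with y*(t) = y(t) for almost every t ≥ 0, such that for all 0 ≤ a < b: sup{|y*(t)| : a ≤ t ≤ b} = esssup{|y(t)| : a ≤ t ≤ b}. -/
open Set MeasureTheory

open Filter Metric Topology ENNReal

/-- Density lemma: if `t ∈ [a,b]` with `a < b` is a Lebesgue density point of `s`,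
then `s ∩ [a,b]` has positive measure. -/
lemma pos_of_density {s : Set ℝ} {a b t : ℝ} (ha : a ≤ t) (hb : t ≤ b) (hab : a < b)
    (hd : Tendsto (fun δ => volume (s ∩ closedBall t δ) / volume (closedBall t δ))
      (𝓝[>] 0) (𝓝 1)) : volume (s ∩ Icc a b) ≠ 0 := by
  have h1 : ∀ᶠ δ in 𝓝[>] (0:ℝ),
      ENNReal.ofReal (3/4) < volume (s ∩ closedBall t δ) / volume (closedBall t δ) :=
    hd (Ioi_mem_nhds (ENNReal.ofReal_lt_one.2 (by norm_num)))
  have h2 : Ioc (0:ℝ) ((b-a)/2) ∈ 𝓝[>] (0:ℝ) :=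
    Ioc_mem_nhdsGT_of_mem ⟨le_rfl, by linarith⟩
  obtain ⟨δ, hδr, hδ0, hδle⟩ := (h1.and h2).exists
  have hδpos : (0:ℝ) < δ := hδ0
  have hball : volume (closedBall t δ) = ENNReal.ofReal (2*δ) := Real.volume_closedBall t δ
  have hlow : ENNReal.ofReal (3/4) * volume (closedBall t δ) < volume (s ∩ closedBall t δ) :=
    ENNReal.mul_lt_of_lt_div hδr
  have hlow' : ENNReal.ofReal (3/2*δ) < volume (s ∩ closedBall t δ) := by
    refine lt_of_le_of_lt (le_of_eq ?_) hlow
    rw [hball, ← ENNReal.ofReal_mul (by norm_num : (0:ℝ) ≤ 3/4)]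
    congr 1; ring
  have hover : volume (closedBall t δ \ Icc a b) ≤ ENNReal.ofReal δ := by
    rcases le_or_gt t ((a+b)/2) with hmid | hmid
    · have hsub : closedBall t δ \ Icc a b ⊆ Ico (t-δ) a := by
        intro x hx
        rw [Real.closedBall_eq_Icc] at hx
        obtain ⟨⟨hx1, hx2⟩, hx3⟩ := hx
        refine ⟨hx1, ?_⟩
        by_contra hxa
        exact hx3 ⟨le_of_not_gt hxa, by linarith⟩
      refine le_trans (measure_mono hsub) ?_
      rw [Real.volume_Ico]
      exact ENNReal.ofReal_le_ofReal (by linarith)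
    · have hsub : closedBall t δ \ Icc a b ⊆ Ioc b (t+δ) := by
        intro x hx
        rw [Real.closedBall_eq_Icc] at hx
        obtain ⟨⟨hx1, hx2⟩, hx3⟩ := hx
        refine ⟨?_, hx2⟩
        by_contra hxb
        exact hx3 ⟨by linarith [le_of_not_gt hxb], le_of_not_gt hxb⟩
      refine le_trans (measure_mono hsub) ?_
      rw [Real.volume_Ioc]
      exact ENNReal.ofReal_le_ofReal (by linarith)
  intro hzero
  have hsplit : volume (s ∩ closedBall t δ) ≤
      volume (s ∩ Icc a b) + volume (closedBall t δ \ Icc a b) := by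
    refine le_trans (measure_mono ?_) (measure_union_le _ _)
    intro x ⟨hxs, hxb⟩
    by_cases hxi : x ∈ Icc a b
    · exact Or.inl ⟨hxs, hxi⟩
    · exact Or.inr ⟨hxb, hxi⟩
  rw [hzero, zero_add] at hsplit
  have : ENNReal.ofReal (3/2*δ) < ENNReal.ofReal δ :=
    lt_of_lt_of_le hlow' (hsplit.trans hover)
  rw [ENNReal.ofReal_lt_ofReal_iff hδpos] at this
  linarith

/-- Remark 3.1: a measurable, locally essentially bounded function `y` on `[0,∞)`
agrees almost everywhere with a "true" function `y*` whose pointwise supremum over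
every interval `[a,b] ⊆ [0,∞)` equals the essential supremum of `|y|` there. -/
theorem exists_true_representative (y : ℝ → ℝ)
    (hmeas : Measurable y)
    (hbdd : ∀ a b : ℝ, 0 ≤ a → ∃ M : ℝ,
      ∀ᵐ t ∂(volume.restrict (Icc a b)), |y t| ≤ M) :
    ∃ ystar : ℝ → ℝ,
      (∀ᵐ t ∂(volume.restrict (Ici (0:ℝ))), ystar t = y t) ∧
      ∀ a b : ℝ, 0 ≤ a → a < b →
        sSup ((fun t => |ystar t|) '' Icc a b) =
          essSup (fun t => |y t|) (volume.restrict (Icc a b)) := by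
  classical
  -- superlevel sets at rational levels
  set S : ℚ → Set ℝ := fun r => {u | (r:ℝ) < |y u|} with hS
  have hSmeas : ∀ r : ℚ, MeasurableSet (S r) := fun r =>
    measurableSet_lt measurable_const hmeas.abs
  -- Lebesgue density points of the superlevel sets
  set D : ℚ → Set ℝ := fun r => {t | Tendsto
      (fun δ => volume (S r ∩ closedBall t δ) / volume (closedBall t δ)) (𝓝[>] 0) (𝓝 1)}
    with hD
  set H : ℝ → Prop := fun t => ∀ r : ℚ, t ∈ S r → t ∈ D r with hH
  set ystar : ℝ → ℝ := fun t => if H t then y t else 0 with hystar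
  have hyt_pos : ∀ t, H t → ystar t = y t := fun t h => if_pos h
  have hyt_neg : ∀ t, ¬ H t → ystar t = 0 := fun t h => if_neg h
  -- by the Lebesgue density theorem, `S r \ D r` is null
  have hnull : ∀ r : ℚ, volume (S r \ D r) = 0 := by
    intro r
    have h := Besicovitch.ae_tendsto_measure_inter_div volume (S r)
    rw [ae_iff] at h
    rw [Measure.restrict_apply' (hSmeas r)] at h
    refine measure_mono_null ?_ h
    intro x ⟨hx1, hx2⟩
    exact ⟨hx2, hx1⟩
  have hbad : volume {t | ystar t ≠ y t} = 0 := by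
    refine measure_mono_null ?_ (measure_iUnion_null hnull)
    intro t ht
    simp only [mem_setOf_eq] at ht
    by_cases h : H t
    · exact absurd (hyt_pos t h) ht
    · obtain ⟨r, hr⟩ := not_forall.1 h
      rw [Classical.not_imp] at hr
      exact mem_iUnion.2 ⟨r, hr.1, hr.2⟩
  have hae : ∀ᵐ t ∂(volume.restrict (Ici (0:ℝ))), ystar t = y t :=
    ae_restrict_of_ae (by rw [ae_iff]; exact hbad)
  refine ⟨ystar, hae, ?_⟩
  intro a b ha hab
  -- the set of a.e. upper bounds of |y| on [a,b]
  set U : Set ℝ := {M | ∀ᵐ t ∂(volume.restrict (Icc a b)), |y t| ≤ M} with hU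
  have hEss : essSup (fun t => |y t|) (volume.restrict (Icc a b)) = sInf U := by
    rw [essSup, Filter.limsup_eq]
  have hUne : U.Nonempty := hbdd a b ha
  have hIccpos : volume (Icc a b) ≠ 0 := by
    rw [Real.volume_Icc]
    simp only [ne_eq, ENNReal.ofReal_eq_zero, not_le]
    linarith
  have hres_ne : volume.restrict (Icc a b) ≠ 0 := by
    rw [Ne, Measure.restrict_eq_zero]
    exact hIccpos
  haveI : Filter.NeBot (ae (volume.restrict (Icc a b))) := ae_neBot.2 hres_ne
  have hUnonneg : ∀ M ∈ U, (0:ℝ) ≤ M := by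
    intro M hM
    have hM' : ∀ᵐ t ∂(volume.restrict (Icc a b)), |y t| ≤ M := hM
    obtain ⟨t, ht⟩ := hM'.exists
    exact le_trans (abs_nonneg _) ht
  have hUbdd : BddBelow U := ⟨0, hUnonneg⟩
  -- pointwise bound: |ystar t| ≤ sInf U on [a,b]
  have hub : ∀ t ∈ Icc a b, |ystar t| ≤ sInf U := by
    intro t ht
    by_cases h : H t
    · rw [hyt_pos t h]
      by_contra hlt
      push_neg at hlt
      obtain ⟨r, hr1, hr2⟩ := exists_rat_btwn hlt
      have htS : t ∈ S r := hr2
      have htD : t ∈ D r := h r htS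
      have hpos : volume (S r ∩ Icc a b) ≠ 0 :=
        pos_of_density ht.1 ht.2 hab htD
      have hrle : (r:ℝ) ≤ sInf U := by
        refine le_csInf hUne ?_
        intro M hM
        by_contra hMr
        push_neg at hMr
        have hM' : ∀ᵐ u ∂(volume.restrict (Icc a b)), |y u| ≤ M := hM
        rw [ae_iff, Measure.restrict_apply' measurableSet_Icc] at hM'
        refine hpos (measure_mono_null ?_ hM')
        intro x ⟨hx1, hx2⟩
        refine ⟨?_, hx2⟩
        simp only [mem_setOf_eq, not_le]
        exact lt_trans hMr hx1
      linarith
    · rw [hyt_neg t h]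
      simpa using le_csInf hUne hUnonneg
  have himne : ((fun t => |ystar t|) '' Icc a b).Nonempty :=
    ⟨|ystar a|, mem_image_of_mem _ ⟨le_refl a, le_of_lt hab⟩⟩
  have himbdd : BddAbove ((fun t => |ystar t|) '' Icc a b) := by
    refine ⟨sInf U, ?_⟩
    rintro x ⟨t, ht, rfl⟩
    exact hub t ht
  have hle1 : sSup ((fun t => |ystar t|) '' Icc a b) ≤ sInf U := by
    refine csSup_le himne ?_
    rintro x ⟨t, ht, rfl⟩
    exact hub t ht
  have hle2 : sInf U ≤ sSup ((fun t => |ystar t|) '' Icc a b) := by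
    by_contra hc
    push_neg at hc
    set c := sSup ((fun t => |ystar t|) '' Icc a b) with hcdef
    have hTpos : volume ({u | c < |y u|} ∩ Icc a b) ≠ 0 := by
      intro h0
      have hcU : c ∈ U := by
        have : ∀ᵐ t ∂(volume.restrict (Icc a b)), |y t| ≤ c := by
          rw [ae_iff, Measure.restrict_apply' measurableSet_Icc]
          refine measure_mono_null ?_ h0
          intro x ⟨hx1, hx2⟩
          exact ⟨not_le.1 hx1, hx2⟩
        exact this
      exact absurd (csInf_le hUbdd hcU) (not_le.2 hc)
    have hne : (({u | c < |y u|} ∩ Icc a b) \ {t | ystar t ≠ y t}).Nonempty := by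
      by_contra hemp
      rw [not_nonempty_iff_eq_empty, diff_eq_empty] at hemp
      exact hTpos (measure_mono_null hemp hbad)
    obtain ⟨t, ⟨ht1, ht2⟩, ht3⟩ := hne
    simp only [mem_setOf_eq, not_not] at ht3
    have hle : |ystar t| ≤ c := le_csSup himbdd (mem_image_of_mem _ ht2)
    rw [ht3] at hle
    exact absurd ht1 (not_lt.2 hle)
  rw [hEss]
  exact le_antisymm hle1 hle2
end

section
/- Let γ₁ and γ₂ be functions of class 𝒦. (a) If γ₁(γ₂(r)) < r for all r > 0, then γ₂(γ₁(r)) < r for all r > 0. (b) More generally, if r₀ ≥ 0 and γ₁(γ₂(r)) < r for all r > r₀, then there exists r₀' ≥ r₀ such that γ₂(γ₁(r)) < r for all r > r₀'. -/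
open Set Filter

/-- Remark 4.6: for class-𝒦 functions `γ₁`, `γ₂`:
(a) if `γ₁(γ₂(r)) < r` for all `r > 0` then `γ₂(γ₁(r)) < r` for all `r > 0`;
(b) if `r₀ ≥ 0` and `γ₁(γ₂(r)) < r` for all `r > r₀`, then there is `r₀' ≥ r₀` with
`γ₂(γ₁(r)) < r` for all `r > r₀'`. -/
theorem small_gain_symmetry (γ1 γ2 : ℝ → ℝ) (hγ1 : ClassK γ1) (hγ2 : ClassK γ2) :
    ((∀ r, 0 < r → γ1 (γ2 r) < r) → ∀ r, 0 < r → γ2 (γ1 r) < r) ∧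
    (∀ r0, 0 ≤ r0 → (∀ r, r0 < r → γ1 (γ2 r) < r) →
      ∃ r0', r0 ≤ r0' ∧ ∀ r, r0' < r → γ2 (γ1 r) < r) := by
  obtain ⟨-, h1mono, h10, h1nn⟩ := hγ1
  obtain ⟨-, h2mono, -, h2nn⟩ := hγ2
  constructor
  · intro H r hr
    by_contra h
    push_neg at h
    have hg1r : 0 < γ1 r := h10 ▸ h1mono (show (0:ℝ) ∈ Ici 0 from le_refl (0:ℝ)) hr.le hr
    have hkey := H (γ1 r) hg1r
    have : γ1 r ≤ γ1 (γ2 (γ1 r)) :=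
      h1mono.monotoneOn hr.le (le_trans hr.le h) h
    linarith
  · intro r0 hr0 H
    refine ⟨max r0 (γ2 r0), le_max_left _ _, fun r hr => ?_⟩
    have hrpos : 0 < r := lt_of_le_of_lt (le_trans hr0 (le_max_left _ _)) hr
    rcases le_or_gt (γ1 r) r0 with hle | hgt
    · calc γ2 (γ1 r) ≤ γ2 r0 := h2mono.monotoneOn (h1nn r hrpos.le) hr0 hle
        _ ≤ max r0 (γ2 r0) := le_max_right _ _
        _ < r := hr
    · by_contra h
      push_neg at h
      have hkey := H (γ1 r) hgt
      have : γ1 r ≤ γ1 (γ2 (γ1 r)) :=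
        h1mono.monotoneOn hrpos.le (le_trans hrpos.le h) h
      linarith
end
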